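/- arXiv:1705.02595 — 9 statements merged into one kernel-verified Lean document; each statement's English description precedes it below -/
import Mathlib

section
/- Let d ≥ 2 be an integer and let χ : (0,∞) → (0,∞) be an increasing homeomorphism of (0,∞) onto itself for which there exist constants c₁, c₂ > 0 and 0 < α₁ ≤ α₂ < 1 with c₁(R/r)^{α₁} ≤ χ(R)/χ(r) ≤ c₂(R/r)^{α₂} for all 0 < r ≤ R < ∞. Then there exists a constant C > 0 such that for every r > 0, ∫₀^∞ min( (χ⁻¹(1/t))^{d/2}, t·χ(r⁻²)/r^d ) dt ≤ C/(r^d·χ(r⁻²)). -/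
open MeasureTheory Set

/- Split the integral at `T = 1 / χ(r⁻²)`. Below `T` the second term of the minimum gives
`∫₀^T t χ(r⁻²) / r^d dt = 1 / (2 r^d χ(r⁻²))`. Above `T` the point `ρ = χ⁻¹(1/t)` lies below
`r⁻²`, and the upper scaling `χ(r⁻²) t = χ(r⁻²) / χ(ρ) ≤ c₂ (r⁻² / ρ)^{α₂}` turns into the decay
`ρ^{d/2} ≤ r^{-d} (c₂ / (χ(r⁻²) t))^q` with `q = d / (2 α₂) > 1`, which is integrable at infinity. -/

theorem integral_Ioi_le_of_le_mul_of_le_rpow {f : ℝ → ℝ} {a K T q : ℝ} (hT : 0 < T) (hq : 1 < q)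
    (hf : ∀ t, 0 < t → 0 ≤ f t) (hsmall : ∀ t, 0 < t → t ≤ T → f t ≤ a * t)
    (hlarge : ∀ t, T < t → f t ≤ K * t ^ (-q)) :
    ∫ t in Ioi 0, f t ≤ a * T ^ 2 / 2 + K * T ^ (1 - q) / (q - 1) := by
  set g : ℝ → ℝ := fun t => if t ≤ T then a * t else K * t ^ (-q)
  have hg_small : EqOn g (fun t => a * t) (Ioc 0 T) := fun t ht => if_pos ht.2
  have hg_large : EqOn g (fun t => K * t ^ (-q)) (Ioi T) := fun t ht => if_neg (not_le.2 ht)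
  have hint_small : IntegrableOn g (Ioc 0 T) :=
    (continuous_const.mul continuous_id).integrableOn_Ioc.congr_fun hg_small.symm measurableSet_Ioc
  have hint_large : IntegrableOn g (Ioi T) :=
    IntegrableOn.congr_fun ((integrableOn_Ioi_rpow_of_lt (neg_lt_neg hq) hT).const_mul K)
      hg_large.symm measurableSet_Ioi
  have hunion : Ioc 0 T ∪ Ioi T = Ioi 0 := Ioc_union_Ioi_eq_Ioi hT.le
  calc ∫ t in Ioi 0, f t ≤ ∫ t in Ioi 0, g t := by
        refine integral_mono_of_nonneg ?_ (hunion ▸ hint_small.union hint_large) ?_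
        · filter_upwards [ae_restrict_mem measurableSet_Ioi] with t ht using hf t ht
        · filter_upwards [ae_restrict_mem measurableSet_Ioi] with t ht
          by_cases htT : t ≤ T
          · exact (hsmall t ht htT).trans_eq (hg_small ⟨ht, htT⟩).symm
          · exact (hlarge t (not_le.1 htT)).trans_eq (hg_large (not_le.1 htT)).symm
    _ = (∫ t in Ioc 0 T, g t) + ∫ t in Ioi T, g t := by
        rw [← hunion]
        exact setIntegral_union (Ioc_disjoint_Ioi le_rfl) measurableSet_Ioi hint_small hint_large
    _ = a * T ^ 2 / 2 + K * T ^ (1 - q) / (q - 1) := by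
        rw [setIntegral_congr_fun measurableSet_Ioc hg_small,
          setIntegral_congr_fun measurableSet_Ioi hg_large,
          ← intervalIntegral.integral_of_le hT.le, intervalIntegral.integral_const_mul, integral_id,
          integral_const_mul, integral_Ioi_rpow_of_lt (by linarith) hT, neg_add_eq_sub]
        have : 1 - q ≠ 0 := by linarith
        have : q - 1 ≠ 0 := by linarith
        field_simp
        ring

theorem rpow_le_of_div_le_mul_div_rpow {ρ B x y c α p : ℝ} (hρ : 0 < ρ) (hB : 0 < B) (hx : 0 < x)
    (hy : 0 < y) (hc : 0 < c) (hα : 0 < α) (hp : 0 ≤ p) (h : y / x ≤ c * (B / ρ) ^ α) :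
    ρ ^ p ≤ B ^ p * (c * x / y) ^ (p / α) := by
  have hpow : (y / (c * x)) ^ (p / α) ≤ B ^ p / ρ ^ p := by
    calc (y / (c * x)) ^ (p / α) ≤ ((B / ρ) ^ α) ^ (p / α) := by
          gcongr
          rw [div_le_iff₀ (by positivity)]
          exact ((div_le_iff₀ hx).1 h).trans_eq (by ring)
      _ = B ^ p / ρ ^ p := by
          rw [← Real.rpow_mul (by positivity), mul_div_cancel₀ _ hα.ne', Real.div_rpow hB.le hρ.le]
  rw [← inv_div, Real.inv_rpow (by positivity), ← div_eq_mul_inv,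
    le_div_iff₀ (by positivity), mul_comm]
  rwa [le_div_iff₀ (by positivity)] at hpow

theorem rpow_inv_one_div_le_of_upper_scaling {χ χinv : ℝ → ℝ} {c α p B t : ℝ} (hmono : StrictMonoOn χ (Ioi 0))
    (hinvpos : ∀ y, 0 < y → 0 < χinv y) (hright : ∀ y, 0 < y → χ (χinv y) = y)
    (hupper : ∀ r R, 0 < r → r ≤ R → χ R / χ r ≤ c * (R / r) ^ α)
    (hc : 0 < c) (hα : 0 < α) (hp : 0 ≤ p) (hB : 0 < B) (hχB : 0 < χ B) (ht : (χ B)⁻¹ < t) :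
    χinv (1 / t) ^ p ≤ B ^ p * (c / χ B) ^ (p / α) * t ^ (-(p / α)) := by
  have ht0 : 0 < t := (inv_pos.2 hχB).trans ht
  have hρ : 0 < χinv (1 / t) := hinvpos _ (by positivity)
  have hρB : χinv (1 / t) ≤ B := by
    rw [← hmono.le_iff_le hρ hB, hright _ (by positivity), one_div]
    exact (inv_lt_of_inv_lt₀ hχB ht).le
  have h := hupper _ _ hρ hρB
  rw [hright _ (by positivity)] at h
  refine (rpow_le_of_div_le_mul_div_rpow hρ hB (by positivity) hχB hc hα hp h).trans_eq ?_
  rw [mul_one_div, div_right_comm, Real.div_rpow (by positivity) ht0.le, Real.rpow_neg ht0.le]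
  ring

theorem inv_sq_rpow_div_two {r : ℝ} (hr : 0 ≤ r) (n : ℕ) : ((r ^ 2)⁻¹) ^ ((n : ℝ) / 2) = (r ^ n)⁻¹ := by
  rw [Real.inv_rpow (by positivity), ← Real.rpow_natCast r 2, ← Real.rpow_mul hr,
    show ((2 : ℕ) : ℝ) * ((n : ℝ) / 2) = n by push_cast; ring, Real.rpow_natCast]

theorem stmt_4_general (d : ℕ) (hd : 2 ≤ d)
    (χ χinv : ℝ → ℝ)
    (hχpos : ∀ x : ℝ, 0 < x → 0 < χ x)
    (hχmono : StrictMonoOn χ (Set.Ioi 0))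
    (hinvpos : ∀ y : ℝ, 0 < y → 0 < χinv y)
    (hright : ∀ y : ℝ, 0 < y → χ (χinv y) = y)
    (c₁ c₂ α₁ α₂ : ℝ) (hc₂ : 0 < c₂)
    (hα₁ : 0 < α₁) (hα : α₁ ≤ α₂) (hα₂ : α₂ < 1)
    (hscale : ∀ r R : ℝ, 0 < r → r ≤ R →
      c₁ * (R / r) ^ α₁ ≤ χ R / χ r ∧ χ R / χ r ≤ c₂ * (R / r) ^ α₂) :
    ∃ C : ℝ, 0 < C ∧ ∀ r : ℝ, 0 < r →
      ∫ t in Set.Ioi (0 : ℝ),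
          min (χinv (1 / t) ^ ((d : ℝ) / 2)) (t * χ ((r ^ 2)⁻¹) / r ^ d)
        ≤ C / (r ^ d * χ ((r ^ 2)⁻¹)) := by
  have hα₂0 : 0 < α₂ := hα₁.trans_le hα
  set q : ℝ := (d : ℝ) / 2 / α₂
  have hq : 1 < q := by
    have : (2 : ℝ) ≤ d := by exact_mod_cast hd
    rw [lt_div_iff₀ hα₂0, one_mul, lt_div_iff₀ two_pos]
    linarith
  have hq1 : 0 < q - 1 := sub_pos.2 hq
  refine ⟨1 / 2 + c₂ ^ q / (q - 1), by positivity, fun r hr => ?_⟩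
  set A := χ ((r ^ 2)⁻¹)
  have hA : 0 < A := hχpos _ (by positivity)
  have hexp : (c₂ / A) ^ q * A⁻¹ ^ (1 - q) = c₂ ^ q * A⁻¹ := by
    rw [div_eq_mul_inv, Real.mul_rpow hc₂.le (inv_pos.2 hA).le, mul_assoc,
      ← Real.rpow_add (inv_pos.2 hA), add_sub_cancel, Real.rpow_one]
  calc _ ≤ A / r ^ d * A⁻¹ ^ 2 / 2 + (r ^ d)⁻¹ * (c₂ / A) ^ q * A⁻¹ ^ (1 - q) / (q - 1) :=
        integral_Ioi_le_of_le_mul_of_le_rpow (inv_pos.2 hA) hq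
          (fun t ht => le_min (Real.rpow_nonneg (hinvpos _ (by positivity)).le _) (by positivity))
          (fun t _ _ => (min_le_right _ _).trans_eq (by ring))
          (fun t ht => (min_le_left _ _).trans <| (inv_sq_rpow_div_two hr.le d) ▸
            rpow_inv_one_div_le_of_upper_scaling hχmono hinvpos hright (fun r R hr hrR => (hscale r R hr hrR).2)
              hc₂ hα₂0 (by positivity) (by positivity) hA ht)
    _ = _ := by
        rw [mul_assoc _ ((c₂ / A) ^ q), hexp]
        field_simp

/-- the key Green function integral bound: for an increasing homeomorphism `χ`
of `(0,∞)` onto itself with global weak scaling exponents `0 < α₁ ≤ α₂ < 1` and `d ≥ 2`,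
`∫₀^∞ min((χ⁻¹(1/t))^{d/2}, t·χ(r⁻²)/r^d) dt ≤ C/(r^d·χ(r⁻²))`. -/
theorem stmt_4 (d : ℕ) (hd : 2 ≤ d)
    (χ χinv : ℝ → ℝ)
    (hχpos : ∀ x : ℝ, 0 < x → 0 < χ x)
    (hχmono : StrictMonoOn χ (Set.Ioi 0))
    (hχbij : Set.BijOn χ (Set.Ioi 0) (Set.Ioi 0))
    (hinvpos : ∀ y : ℝ, 0 < y → 0 < χinv y)
    (hleft : ∀ x : ℝ, 0 < x → χinv (χ x) = x)
    (hright : ∀ y : ℝ, 0 < y → χ (χinv y) = y)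
    (c₁ c₂ α₁ α₂ : ℝ) (hc₁ : 0 < c₁) (hc₂ : 0 < c₂)
    (hα₁ : 0 < α₁) (hα : α₁ ≤ α₂) (hα₂ : α₂ < 1)
    (hscale : ∀ r R : ℝ, 0 < r → r ≤ R →
      c₁ * (R / r) ^ α₁ ≤ χ R / χ r ∧ χ R / χ r ≤ c₂ * (R / r) ^ α₂) :
    ∃ C : ℝ, 0 < C ∧ ∀ r : ℝ, 0 < r →
      ∫ t in Set.Ioi (0 : ℝ),
          min (χinv (1 / t) ^ ((d : ℝ) / 2)) (t * χ ((r ^ 2)⁻¹) / r ^ d)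
        ≤ C / (r ^ d * χ ((r ^ 2)⁻¹)) :=
  stmt_4_general d hd χ χinv hχpos hχmono hinvpos hright c₁ c₂ α₁ α₂ hc₂ hα₁ hα hα₂ hscale
end

section
/- Let d ≥ 2 and let D ⊂ ℝ^d be a nonempty bounded open set. Let Φ : (0,∞) → (0,∞) be nondecreasing, satisfy Φ(2t) ≤ 4Φ(t) for all t > 0, and be such that t ↦ Φ(t)/t² is nonincreasing on (0,∞). Let T, λ, M > 0, let f : (0,∞) → [0,∞) be nonincreasing with f(Φ(diam D)) > 0, and let p : (T,∞)×D×D → [0,∞) be measurable with p(t,x,y) ≤ M·e^{−λt}·Φ(δ_D(x))^{1/2}·Φ(δ_D(y))^{1/2} for all t > T and all x, y ∈ D. Then there exists a constant C > 0 such that for all x, y ∈ D with x ≠ y, ∫_T^∞ p(t,x,y)·f(t) dt ≤ C · min(Φ(δ_D(x))^{1/2}/Φ(|x−y|)^{1/2}, 1) · min(Φ(δ_D(y))^{1/2}/Φ(|x−y|)^{1/2}, 1) · Φ(|x−y|)·f(Φ(|x−y|)) / |x−y|^d. -/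
/-!
For `t > T` the kernel is at most `M e^{-λt} Φ(δ_D(x))^{1/2} Φ(δ_D(y))^{1/2}` and `f(t) ≤ f(T)`,
so the integral is a constant times `Φ(δ_D(x))^{1/2} Φ(δ_D(y))^{1/2}`. With `r = |x - y|` and
`R = diam D`, both `r` and `δ_D` are at most `R`, and the scaling `Φ(R)/R² ≤ Φ(r)/r²` gives
`Φ(δ_D(x))^{1/2} r ≤ min(Φ(δ_D(x))^{1/2}, Φ(r)^{1/2}) R`; the remaining factors are absorbed
into the constant using `r^{d-2} ≤ R^{d-2}` and `f(Φ(r)) ≥ f(Φ(R)) > 0`.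
-/

open MeasureTheory Metric Set Real

theorem two_mul_infDist_compl_le_diam {E : Type*} [NormedAddCommGroup E] [NormedSpace ℝ E]
    [Nontrivial E] {D : Set E} (hD : Bornology.IsBounded D) (x : E) :
    2 * infDist x Dᶜ ≤ diam D := by
  rw [← diam_ball_eq x infDist_nonneg]
  exact diam_mono ball_infDist_compl_subset hD

theorem IsOpen.infDist_compl_pos {E : Type*} [NormedAddCommGroup E] [NormedSpace ℝ E]
    [Nontrivial E] {D : Set E} (hDopen : IsOpen D) (hD : Bornology.IsBounded D) {x : E}
    (hx : x ∈ D) : 0 < infDist x Dᶜ := by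
  have hDc : Dᶜ.Nonempty := nonempty_compl.2 fun h => NormedSpace.unbounded_univ ℝ E (h ▸ hD)
  exact (hDopen.isClosed_compl.notMem_iff_infDist_pos hDc).1 (not_not.2 hx)

theorem setIntegral_Ioi_mul_le_of_le_exp {g f : ℝ → ℝ} {T lam c : ℝ} (hT : 0 < T)
    (hlam : 0 < lam) (hf_nonneg : ∀ t, 0 < t → 0 ≤ f t) (hf_anti : AntitoneOn f (Ioi 0))
    (hg_nonneg : ∀ t, T < t → 0 ≤ g t) (hg : ∀ t, T < t → g t ≤ c * exp (-lam * t)) :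
    ∫ t in Ioi T, g t * f t ≤ c * f T * (exp (-lam * T) / lam) := by
  have hexp : ∫ t in Ioi T, exp (-lam * t) = exp (-lam * T) / lam := by
    rw [integral_exp_mul_Ioi (neg_lt_zero.2 hlam), div_neg, neg_div, neg_neg]
  rw [← hexp, ← integral_const_mul]
  refine integral_mono_of_nonneg ?_ ((exp_neg_integrableOn_Ioi T hlam).const_mul _) ?_
  · filter_upwards [ae_restrict_mem measurableSet_Ioi] with t ht
    exact mul_nonneg (hg_nonneg t ht) (hf_nonneg t (hT.trans ht))
  · filter_upwards [ae_restrict_mem measurableSet_Ioi] with t (ht : T < t)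
    calc g t * f t ≤ g t * f T :=
          mul_le_mul_of_nonneg_left (hf_anti hT (hT.trans ht) ht.le) (hg_nonneg t ht)
      _ ≤ c * exp (-lam * t) * f T := mul_le_mul_of_nonneg_right (hg t ht) (hf_nonneg T hT)
      _ = c * f T * exp (-lam * t) := by ring

section Scaling

variable {Φ : ℝ → ℝ}

theorem mul_sq_le_of_antitoneOn_div_sq (hΦdec : AntitoneOn (fun t => Φ t / t ^ 2) (Ioi 0))
    {r R : ℝ} (hr : 0 < r) (hrR : r ≤ R) : Φ R * r ^ 2 ≤ Φ r * R ^ 2 := by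
  have hR : 0 < R := hr.trans_le hrR
  have h := hΦdec (mem_Ioi.2 hr) (mem_Ioi.2 hR) hrR
  rwa [div_le_div_iff₀ (by positivity) (by positivity)] at h

theorem sqrt_mul_le_min_div_mul (hΦpos : ∀ t, 0 < t → 0 < Φ t)
    (hΦmono : MonotoneOn Φ (Ioi 0)) (hΦdec : AntitoneOn (fun t => Φ t / t ^ 2) (Ioi 0))
    {s r R : ℝ} (hs : 0 < s) (hsR : s ≤ R) (hr : 0 < r) (hrR : r ≤ R) :
    √(Φ s) * r ≤ min (√(Φ s) / √(Φ r)) 1 * √(Φ r) * R := by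
  have hR : 0 < R := hr.trans_le hrR
  have hS : 0 < √(Φ r) := sqrt_pos.2 (hΦpos r hr)
  rw [min_mul_of_nonneg _ _ hS.le, div_mul_cancel₀ _ hS.ne', one_mul,
    min_mul_of_nonneg _ _ hR.le]
  refine le_min (mul_le_mul_of_nonneg_left hrR (sqrt_nonneg _)) ?_
  have hsq : Φ s * r ^ 2 ≤ Φ r * R ^ 2 :=
    (mul_le_mul_of_nonneg_right (hΦmono hs hR hsR) (sq_nonneg r)).trans
      (mul_sq_le_of_antitoneOn_div_sq hΦdec hr hrR)
  have h := sqrt_le_sqrt hsq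
  rwa [sqrt_mul (hΦpos s hs).le, sqrt_mul (hΦpos r hr).le, sqrt_sq hr.le, sqrt_sq hR.le] at h

theorem sqrt_mul_sqrt_mul_div_le (hΦpos : ∀ t, 0 < t → 0 < Φ t)
    (hΦmono : MonotoneOn Φ (Ioi 0)) (hΦdec : AntitoneOn (fun t => Φ t / t ^ 2) (Ioi 0))
    {f : ℝ → ℝ} (hf_nonneg : ∀ t, 0 < t → 0 ≤ f t) (hf_anti : AntitoneOn f (Ioi 0))
    {d : ℕ} (hd : 2 ≤ d) {s₁ s₂ r R : ℝ} (hs₁ : 0 < s₁) (hs₁R : s₁ ≤ R) (hs₂ : 0 < s₂)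
    (hs₂R : s₂ ≤ R) (hr : 0 < r) (hrR : r ≤ R) :
    √(Φ s₁) * √(Φ s₂) * f (Φ R) / R ^ d ≤
      min (√(Φ s₁) / √(Φ r)) 1 * min (√(Φ s₂) / √(Φ r)) 1 * (Φ r * f (Φ r) / r ^ d) := by
  obtain ⟨n, rfl⟩ : ∃ n, d = n + 2 := ⟨d - 2, by omega⟩
  have hR : 0 < R := hr.trans_le hrR
  have hA := sqrt_mul_le_min_div_mul hΦpos hΦmono hΦdec hs₁ hs₁R hr hrR
  have hB := sqrt_mul_le_min_div_mul hΦpos hΦmono hΦdec hs₂ hs₂R hr hrR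
  have hf : f (Φ R) ≤ f (Φ r) := hf_anti (hΦpos r hr) (hΦpos R hR) (hΦmono hr hR hrR)
  have hfR : 0 ≤ f (Φ R) := hf_nonneg _ (hΦpos R hR)
  have hfr : 0 ≤ f (Φ r) := hfR.trans hf
  have hS2 : √(Φ r) ^ 2 = Φ r := sq_sqrt (hΦpos r hr).le
  set S := √(Φ r)
  set m₁ := min (√(Φ s₁) / S) 1
  set m₂ := min (√(Φ s₂) / S) 1
  have hm₁ : 0 ≤ m₁ := le_min (by positivity) zero_le_one
  have hm₂ : 0 ≤ m₂ := le_min (by positivity) zero_le_one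
  rw [div_le_iff₀ (by positivity)]
  calc √(Φ s₁) * √(Φ s₂) * f (Φ R)
      = (√(Φ s₁) * r) * (√(Φ s₂) * r) * f (Φ R) * r ^ n / r ^ (n + 2) := by
        field_simp; ring
    _ ≤ (m₁ * S * R) * (m₂ * S * R) * f (Φ r) * R ^ n / r ^ (n + 2) := by gcongr
    _ = m₁ * m₂ * (Φ r * f (Φ r) / r ^ (n + 2)) * R ^ (n + 2) := by rw [← hS2]; ring

end Scaling

theorem stmt_6_general (d : ℕ) (hd : 2 ≤ d)
    (D : Set (EuclideanSpace ℝ (Fin d)))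
    (hDopen : IsOpen D) (hDne : D.Nonempty) (hDbdd : Bornology.IsBounded D)
    (Φ : ℝ → ℝ) (hΦpos : ∀ t : ℝ, 0 < t → 0 < Φ t)
    (hΦmono : MonotoneOn Φ (Set.Ioi 0))
    (hΦdec : AntitoneOn (fun t => Φ t / t ^ 2) (Set.Ioi 0))
    (T lam M : ℝ) (hT : 0 < T) (hlam : 0 < lam) (hM : 0 < M)
    (f : ℝ → ℝ) (hf_nonneg : ∀ t : ℝ, 0 < t → 0 ≤ f t)
    (hf_anti : AntitoneOn f (Set.Ioi 0))
    (hfdiam : 0 < f (Φ (Metric.diam D)))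
    (p : ℝ → EuclideanSpace ℝ (Fin d) → EuclideanSpace ℝ (Fin d) → ℝ)
    (hp_nonneg : ∀ t : ℝ, T < t → ∀ x ∈ D, ∀ y ∈ D, 0 ≤ p t x y)
    (hp_bound : ∀ t : ℝ, T < t → ∀ x ∈ D, ∀ y ∈ D,
      p t x y ≤ M * Real.exp (-lam * t) *
        Real.sqrt (Φ (Metric.infDist x Dᶜ)) * Real.sqrt (Φ (Metric.infDist y Dᶜ))) :
    ∃ C : ℝ, 0 < C ∧ ∀ x ∈ D, ∀ y ∈ D, x ≠ y →
      ∫ t in Set.Ioi T, p t x y * f t ≤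
        C * min (Real.sqrt (Φ (Metric.infDist x Dᶜ)) / Real.sqrt (Φ (dist x y))) 1 *
          min (Real.sqrt (Φ (Metric.infDist y Dᶜ)) / Real.sqrt (Φ (dist x y))) 1 *
          (Φ (dist x y) * f (Φ (dist x y)) / dist x y ^ d) := by
  have : Nonempty (Fin d) := ⟨⟨0, by omega⟩⟩
  set R := diam D
  have hδ : ∀ x ∈ D, 0 < infDist x Dᶜ ∧ infDist x Dᶜ ≤ R := fun x hx =>
    have hpos := hDopen.infDist_compl_pos hDbdd hx
    ⟨hpos, by linarith [two_mul_infDist_compl_le_diam hDbdd x]⟩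
  obtain ⟨x₀, hx₀⟩ := hDne
  have hR : 0 < R := (hδ x₀ hx₀).1.trans_le (hδ x₀ hx₀).2
  set K := M * f T * (exp (-lam * T) / lam) with hK_def
  have hK : 0 ≤ K := by have := hf_nonneg T hT; positivity
  set C := K * R ^ d / f (Φ R) + 1
  refine ⟨C, by positivity, fun x hx y hy hxy => ?_⟩
  set A := √(Φ (infDist x Dᶜ))
  set B := √(Φ (infDist y Dᶜ))
  have hcore : 0 ≤ A * B * f (Φ R) / R ^ d := by positivity
  calc ∫ t in Ioi T, p t x y * f t
      ≤ M * (A * B) * f T * (exp (-lam * T) / lam) :=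
        setIntegral_Ioi_mul_le_of_le_exp hT hlam hf_nonneg hf_anti
          (fun t ht => hp_nonneg t ht x hx y hy)
          (fun t ht => (hp_bound t ht x hx y hy).trans_eq (by ring))
    _ = K * R ^ d / f (Φ R) * (A * B * f (Φ R) / R ^ d) := by rw [hK_def]; field_simp
    _ ≤ C * (A * B * f (Φ R) / R ^ d) := by gcongr; exact (lt_add_one _).le
    _ ≤ C * (min (A / √(Φ (dist x y))) 1 * min (B / √(Φ (dist x y))) 1 *
          (Φ (dist x y) * f (Φ (dist x y)) / dist x y ^ d)) := by
        gcongr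
        exact sqrt_mul_sqrt_mul_div_le hΦpos hΦmono hΦdec hf_nonneg hf_anti hd (hδ x hx).1
          (hδ x hx).2 (hδ y hy).1 (hδ y hy).2 (dist_pos.2 hxy) (dist_le_diam_of_mem hDbdd hx hy)
    _ = _ := by ring

/-- Lemma 6.1 of the paper: large-time contribution to boundary-decay kernel
estimates. -/
theorem stmt_6 (d : ℕ) (hd : 2 ≤ d)
    (D : Set (EuclideanSpace ℝ (Fin d)))
    (hDopen : IsOpen D) (hDne : D.Nonempty) (hDbdd : Bornology.IsBounded D)
    (Φ : ℝ → ℝ) (hΦpos : ∀ t : ℝ, 0 < t → 0 < Φ t)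
    (hΦmono : MonotoneOn Φ (Set.Ioi 0))
    (hdbl : ∀ t : ℝ, 0 < t → Φ (2 * t) ≤ 4 * Φ t)
    (hΦdec : AntitoneOn (fun t => Φ t / t ^ 2) (Set.Ioi 0))
    (T lam M : ℝ) (hT : 0 < T) (hlam : 0 < lam) (hM : 0 < M)
    (f : ℝ → ℝ) (hf_nonneg : ∀ t : ℝ, 0 < t → 0 ≤ f t)
    (hf_anti : AntitoneOn f (Set.Ioi 0))
    (hfdiam : 0 < f (Φ (Metric.diam D)))
    (p : ℝ → EuclideanSpace ℝ (Fin d) → EuclideanSpace ℝ (Fin d) → ℝ)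
    (hp_meas : ∀ x ∈ D, ∀ y ∈ D, Measurable fun t => p t x y)
    (hp_nonneg : ∀ t : ℝ, T < t → ∀ x ∈ D, ∀ y ∈ D, 0 ≤ p t x y)
    (hp_bound : ∀ t : ℝ, T < t → ∀ x ∈ D, ∀ y ∈ D,
      p t x y ≤ M * Real.exp (-lam * t) *
        Real.sqrt (Φ (Metric.infDist x Dᶜ)) * Real.sqrt (Φ (Metric.infDist y Dᶜ))) :
    ∃ C : ℝ, 0 < C ∧ ∀ x ∈ D, ∀ y ∈ D, x ≠ y →
      ∫ t in Set.Ioi T, p t x y * f t ≤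
        C * min (Real.sqrt (Φ (Metric.infDist x Dᶜ)) / Real.sqrt (Φ (dist x y))) 1 *
          min (Real.sqrt (Φ (Metric.infDist y Dᶜ)) / Real.sqrt (Φ (dist x y))) 1 *
          (Φ (dist x y) * f (Φ (dist x y)) / dist x y ^ d) :=
  stmt_6_general d hd D hDopen hDne hDbdd Φ hΦpos hΦmono hΦdec T lam M hT hlam hM f hf_nonneg
    hf_anti hfdiam p hp_nonneg hp_bound
end

section
/- Let d ≥ 2 be an integer, let Φ : (0,∞) → (0,∞) be an increasing homeomorphism of (0,∞) onto itself satisfying the global weak scaling condition with exponents 2δ₁, 2δ₂ where 0 < δ₁ ≤ δ₂ < 1, and let T > 0. Then there exists a constant C > 0 such that for all a, b > 0 and all r > 0 with Φ(r) ≤ T, ∫_{Φ(r)}^{T} min(Φ(a)^{1/2}/t^{1/2}, 1) · min(Φ(b)^{1/2}/t^{1/2}, 1) · min( Φ⁻¹(t)^{−d}, t/(r^d·Φ(r)) ) dt ≤ C · min(Φ(a)^{1/2}/Φ(r)^{1/2}, 1) · min(Φ(b)^{1/2}/Φ(r)^{1/2}, 1) · Φ(r)/r^d. -/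
/-!
Only the factor `Φ⁻¹(t)^{-d}` of the last minimum is needed. For `t > Φ(r)` put `s = Φ⁻¹(t) ≥ r`;
the upper scaling bound gives `t = Φ(s) ≤ c₂ Φ(r) (s/r)^{2δ₂}`, i.e.
`Φ⁻¹(t)^{-d} ≤ c₂^p r^{-d} (Φ(r)/t)^p` with `p = d/(2δ₂)`. Since `d ≥ 2 > 2δ₂` we have `p > 1`,
so `∫_{Φ(r)}^∞ (Φ(r)/t)^p dt = Φ(r)/(p-1)`, while the two square-root factors are antitone in `t`
and hence bounded by their values at `t = Φ(r)`.
-/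

open MeasureTheory Set

lemma div_rpow_eq_rpow_mul_rpow_neg {a t : ℝ} (p : ℝ) (ha : 0 ≤ a) (ht : 0 ≤ t) :
    (a / t) ^ p = a ^ p * t ^ (-p) := by
  rw [Real.div_rpow ha ht, Real.rpow_neg ht, div_eq_mul_inv]

lemma integrableOn_Ioi_div_rpow {a p : ℝ} (ha : 0 < a) (hp : 1 < p) :
    IntegrableOn (fun t : ℝ ↦ (a / t) ^ p) (Ioi a) := by
  refine IntegrableOn.congr_fun ((integrableOn_Ioi_rpow_of_lt (neg_lt_neg hp) ha).const_mul
    (a ^ p)) (fun t ht ↦ ?_) measurableSet_Ioi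
  rw [div_rpow_eq_rpow_mul_rpow_neg p ha.le (ha.trans ht).le]

lemma integral_Ioi_div_rpow {a p : ℝ} (ha : 0 < a) (hp : 1 < p) :
    ∫ t in Ioi a, (a / t) ^ p = a / (p - 1) := by
  rw [setIntegral_congr_fun measurableSet_Ioi
      (fun t ht ↦ div_rpow_eq_rpow_mul_rpow_neg p ha.le (ha.trans ht).le),
    integral_const_mul, integral_Ioi_rpow_of_lt (neg_lt_neg hp) ha, mul_div_assoc', mul_neg,
    ← Real.rpow_add ha, add_neg_cancel_left, Real.rpow_one, ← neg_div_neg_eq, neg_neg, neg_add',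
    neg_neg]

lemma setIntegral_Ioc_le_of_le_mul_div_rpow {f : ℝ → ℝ} {a T p K : ℝ} (ha : 0 < a) (hp : 1 < p)
    (hK : 0 ≤ K) (hf₀ : ∀ t ∈ Ioc a T, 0 ≤ f t) (hf : ∀ t ∈ Ioc a T, f t ≤ K * (a / t) ^ p) :
    ∫ t in Ioc a T, f t ≤ K * (a / (p - 1)) := by
  have hint := integrableOn_Ioi_div_rpow ha hp
  calc ∫ t in Ioc a T, f t ≤ ∫ t in Ioc a T, K * (a / t) ^ p :=
        integral_mono_of_nonneg (ae_restrict_of_forall_mem measurableSet_Ioc hf₀)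
          ((hint.mono_set Ioc_subset_Ioi_self).const_mul K)
          (ae_restrict_of_forall_mem measurableSet_Ioc hf)
    _ ≤ ∫ t in Ioi a, K * (a / t) ^ p :=
        setIntegral_mono_set (hint.const_mul K)
          (ae_restrict_of_forall_mem measurableSet_Ioi fun t ht ↦ by
            have := (ha.trans ht).le; positivity)
          Ioc_subset_Ioi_self.eventuallyLE
    _ = K * (a / (p - 1)) := by rw [integral_const_mul, integral_Ioi_div_rpow ha hp]

lemma inv_pow_le_of_le_mul_rpow {r s t A α : ℝ} (d : ℕ) (hr : 0 < r) (hs : 0 < s) (ht : 0 < t)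
    (hA : 0 < A) (hα : 0 < α) (h : t ≤ A * (s / r) ^ α) :
    (s ^ d)⁻¹ ≤ (A / t) ^ (d / α) / r ^ d := by
  have hpow : (t / A) ^ (d / α) ≤ (s / r) ^ d := by
    calc (t / A) ^ (d / α) ≤ ((s / r) ^ α) ^ (d / α) := by
          gcongr
          rwa [div_le_iff₀' hA]
      _ = (s / r) ^ d := by
          rw [← Real.rpow_mul (by positivity), mul_div_cancel₀ _ hα.ne', Real.rpow_natCast]
  calc (s ^ d)⁻¹ = ((s / r) ^ d * r ^ d)⁻¹ := by rw [← mul_pow, div_mul_cancel₀ _ hr.ne']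
    _ ≤ ((t / A) ^ (d / α) * r ^ d)⁻¹ := by gcongr
    _ = (A / t) ^ (d / α) / r ^ d := by
        rw [mul_inv, ← Real.inv_rpow (by positivity), inv_div, ← div_eq_mul_inv]

lemma inv_pow_le_of_upper_scaling {Φ Φinv : ℝ → ℝ} {c α r t : ℝ} (d : ℕ)
    (hmono : StrictMonoOn Φ (Ioi 0)) (hinv : 0 < Φinv t) (hright : Φ (Φinv t) = t)
    (hc : 0 < c) (hα : 0 < α) (hr : 0 < r) (hΦr : 0 < Φ r)
    (hscale : ∀ R, r ≤ R → Φ R / Φ r ≤ c * (R / r) ^ α) (hrt : Φ r < t) :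
    (Φinv t ^ d)⁻¹ ≤ c ^ (d / α) * (Φ r / t) ^ (d / α) / r ^ d := by
  have ht : 0 < t := hΦr.trans hrt
  have hrs : r ≤ Φinv t := (hmono.le_iff_le hr hinv).1 (by rw [hright]; exact hrt.le)
  have hle : t ≤ c * Φ r * (Φinv t / r) ^ α := by
    have := hscale _ hrs
    rwa [hright, div_le_iff₀ hΦr, mul_right_comm] at this
  have := inv_pow_le_of_le_mul_rpow d hr hinv ht (by positivity) hα hle
  rwa [mul_div_assoc, Real.mul_rpow hc.le (by positivity)] at this

lemma min_div_sqrt_le_of_le {x u t : ℝ} (hu : 0 < u) (hut : u ≤ t) :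
    min (√x / √t) 1 ≤ min (√x / √u) 1 :=
  min_le_min_right _ <|
    div_le_div_of_nonneg_left (Real.sqrt_nonneg x) (Real.sqrt_pos.2 hu) (Real.sqrt_le_sqrt hut)

theorem stmt_7_general (d : ℕ) (hd : 2 ≤ d)
    (Φ Φinv : ℝ → ℝ)
    (hΦpos : ∀ x : ℝ, 0 < x → 0 < Φ x)
    (hΦmono : StrictMonoOn Φ (Set.Ioi 0))
    (hinvpos : ∀ y : ℝ, 0 < y → 0 < Φinv y)
    (hright : ∀ y : ℝ, 0 < y → Φ (Φinv y) = y)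
    (c₁ c₂ δ₁ δ₂ : ℝ) (hc₂ : 0 < c₂)
    (hδ₁ : 0 < δ₁) (hδ : δ₁ ≤ δ₂) (hδ₂ : δ₂ < 1)
    (hscale : ∀ r R : ℝ, 0 < r → r ≤ R →
      c₁ * (R / r) ^ (2 * δ₁) ≤ Φ R / Φ r ∧ Φ R / Φ r ≤ c₂ * (R / r) ^ (2 * δ₂))
    (T : ℝ) :
    ∃ C : ℝ, 0 < C ∧ ∀ a b r : ℝ, 0 < a → 0 < b → 0 < r → Φ r ≤ T →
      ∫ t in Set.Ioc (Φ r) T,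
          min (Real.sqrt (Φ a) / Real.sqrt t) 1 *
            min (Real.sqrt (Φ b) / Real.sqrt t) 1 *
            min ((Φinv t ^ d)⁻¹) (t / (r ^ d * Φ r))
        ≤ C * min (Real.sqrt (Φ a) / Real.sqrt (Φ r)) 1 *
            min (Real.sqrt (Φ b) / Real.sqrt (Φ r)) 1 * (Φ r / r ^ d) := by
  have hα : 0 < 2 * δ₂ := by linarith
  have hp : 1 < d / (2 * δ₂) := by
    rw [lt_div_iff₀ hα, one_mul]
    linarith [show (2 : ℝ) ≤ d by exact_mod_cast hd]
  refine ⟨c₂ ^ (d / (2 * δ₂)) / (d / (2 * δ₂) - 1),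
    div_pos (Real.rpow_pos_of_pos hc₂ _) (sub_pos.2 hp), fun a b r _ _ hr _ ↦ ?_⟩
  have hΦr := hΦpos r hr
  set p : ℝ := d / (2 * δ₂)
  calc _ ≤ min (√(Φ a) / √(Φ r)) 1 * min (√(Φ b) / √(Φ r)) 1 * c₂ ^ p / r ^ d *
        (Φ r / (p - 1)) := by
        refine setIntegral_Ioc_le_of_le_mul_div_rpow hΦr hp (by positivity)
          (fun t ⟨hrt, _⟩ ↦ ?_) (fun t ⟨hrt, _⟩ ↦ ?_)
        all_goals have ht := hΦr.trans hrt; have hs := hinvpos t ht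
        · positivity
        calc _ ≤ min (√(Φ a) / √(Φ r)) 1 * min (√(Φ b) / √(Φ r)) 1 * (Φinv t ^ d)⁻¹ := by
              gcongr ?_ * ?_ * ?_
              exacts [min_div_sqrt_le_of_le hΦr hrt.le, min_div_sqrt_le_of_le hΦr hrt.le,
                min_le_left _ _]
          _ ≤ _ := by
              grw [inv_pow_le_of_upper_scaling d hΦmono hs (hright t ht) hc₂ hα hr hΦr
                (fun R hR ↦ (hscale r R hr hR).2) hrt]
              exact le_of_eq (by ring)
    _ = _ := by ring

/-- Lemma 6.2 of the paper: the middle-time integral estimate. -/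
theorem stmt_7 (d : ℕ) (hd : 2 ≤ d)
    (Φ Φinv : ℝ → ℝ)
    (hΦpos : ∀ x : ℝ, 0 < x → 0 < Φ x)
    (hΦmono : StrictMonoOn Φ (Set.Ioi 0))
    (hΦbij : Set.BijOn Φ (Set.Ioi 0) (Set.Ioi 0))
    (hinvpos : ∀ y : ℝ, 0 < y → 0 < Φinv y)
    (hleft : ∀ x : ℝ, 0 < x → Φinv (Φ x) = x)
    (hright : ∀ y : ℝ, 0 < y → Φ (Φinv y) = y)
    (c₁ c₂ δ₁ δ₂ : ℝ) (hc₁ : 0 < c₁) (hc₂ : 0 < c₂)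
    (hδ₁ : 0 < δ₁) (hδ : δ₁ ≤ δ₂) (hδ₂ : δ₂ < 1)
    (hscale : ∀ r R : ℝ, 0 < r → r ≤ R →
      c₁ * (R / r) ^ (2 * δ₁) ≤ Φ R / Φ r ∧ Φ R / Φ r ≤ c₂ * (R / r) ^ (2 * δ₂))
    (T : ℝ) (hT : 0 < T) :
    ∃ C : ℝ, 0 < C ∧ ∀ a b r : ℝ, 0 < a → 0 < b → 0 < r → Φ r ≤ T →
      ∫ t in Set.Ioc (Φ r) T,
          min (Real.sqrt (Φ a) / Real.sqrt t) 1 *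
            min (Real.sqrt (Φ b) / Real.sqrt t) 1 *
            min ((Φinv t ^ d)⁻¹) (t / (r ^ d * Φ r))
        ≤ C * min (Real.sqrt (Φ a) / Real.sqrt (Φ r)) 1 *
            min (Real.sqrt (Φ b) / Real.sqrt (Φ r)) 1 * (Φ r / r ^ d) :=
  stmt_7_general d hd Φ Φinv hΦpos hΦmono hinvpos hright c₁ c₂ δ₁ δ₂ hc₂ hδ₁ hδ hδ₂ hscale T
end

section
/- Let d ≥ 1 be an integer and let Φ : (0,∞) → (0,∞) be an increasing homeomorphism of (0,∞) onto itself. Let v : (0,∞) → (0,∞) be nonincreasing and suppose there exist constants c₁, c₂ > 0 and 0 < γ₁ ≤ γ₂ < 1 such that c₁(s/t)^{1−γ₂} ≤ v(t)/v(s) ≤ c₂(s/t)^{1−γ₁} for all 0 < t ≤ s < ∞. Then there exists a constant C ≥ 1 such that for all a, b, r > 0, the integral ∫₀^{Φ(r)} min(Φ(a)^{1/2}/t^{1/2}, 1) · min(Φ(b)^{1/2}/t^{1/2}, 1) · min( Φ⁻¹(t)^{−d}, t/(r^d·Φ(r)) ) · v(t) dt lies between C⁻¹·A and C·A, where A = min(Φ(a)^{1/2}/Φ(r)^{1/2},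 1) · min(Φ(b)^{1/2}/Φ(r)^{1/2}, 1) · Φ(r)·v(Φ(r))/r^d. -/
/-!
For `0 < t ≤ T := Φ r` we have `Φinv t ≤ r`, so the kernel minimum is always `t / (r ^ d * T)` and
the integral equals `(r ^ d * T)⁻¹ * ∫ t in (0, T], w t * t * v t` with
`w t = min (√(Φ a) / √t) 1 * min (√(Φ b) / √t) 1`. The weight `w` is antitone, while
`t * w t = min √(Φ a) √t * min √(Φ b) √t` is monotone. On `(T/2, T]` the antitonicity of `w` and `v`
gives the lower bound with constant `1/4`. For the upper bound, `t * w t ≤ T * w T` and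
`v t ≤ c₂ (T / t) ^ (1 - γ₁) v T`, and `∫ t in (0, T], (T / t) ^ (1 - γ₁) = T / γ₁`.
-/

open MeasureTheory Set

section IntegralsOverIoc

variable {v w : ℝ → ℝ} {T c γ : ℝ}

lemma div_rpow_one_sub_eq (hT : 0 ≤ T) {t : ℝ} (ht : 0 < t) :
    (T / t) ^ (1 - γ) = T ^ (1 - γ) * t ^ (γ - 1) := by
  rw [Real.div_rpow hT ht.le, div_eq_mul_inv, ← Real.rpow_neg ht.le, neg_sub]

lemma integrableOn_Ioc_div_rpow (hT : 0 < T) (hγ : 0 < γ) :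
    IntegrableOn (fun t => (T / t) ^ (1 - γ)) (Ioc 0 T) := by
  have h : IntegrableOn (fun t => T ^ (1 - γ) * t ^ (γ - 1)) (Ioc 0 T) :=
    ((intervalIntegral.intervalIntegrable_rpow' (by linarith)).1).const_mul _
  exact h.congr_fun (fun t ht => (div_rpow_one_sub_eq hT.le ht.1).symm) measurableSet_Ioc

lemma integral_Ioc_div_rpow (hT : 0 < T) (hγ : 0 < γ) :
    ∫ t in Ioc 0 T, (T / t) ^ (1 - γ) = T / γ := by
  rw [setIntegral_congr_fun measurableSet_Ioc (fun t ht => div_rpow_one_sub_eq hT.le ht.1),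
    integral_const_mul, ← intervalIntegral.integral_of_le hT.le,
    integral_rpow (Or.inl (by linarith)), sub_add_cancel, Real.zero_rpow hγ.ne', sub_zero,
    mul_div_assoc', ← Real.rpow_add hT, sub_add_cancel, Real.rpow_one]

lemma nonneg_of_antitoneOn_Ioc (hv : AntitoneOn v (Ioc 0 T)) (hvT : 0 ≤ v T) {t : ℝ}
    (ht : t ∈ Ioc 0 T) : 0 ≤ v t :=
  hvT.trans (hv ht ⟨ht.1.trans_le ht.2, le_rfl⟩ ht.2)

lemma integrableOn_Ioc_of_le_mul_div_rpow (hT : 0 < T) (hγ : 0 < γ)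
    (hv : AntitoneOn v (Ioc 0 T)) (hvT : 0 ≤ v T)
    (hscale : ∀ t ∈ Ioc 0 T, v t ≤ c * (T / t) ^ (1 - γ) * v T) :
    IntegrableOn v (Ioc 0 T) := by
  refine Integrable.mono' ((integrableOn_Ioc_div_rpow hT hγ).const_mul (c * v T))
    (aemeasurable_restrict_of_antitoneOn measurableSet_Ioc hv).aestronglyMeasurable ?_
  filter_upwards [ae_restrict_mem measurableSet_Ioc] with t ht
  rw [Real.norm_of_nonneg (nonneg_of_antitoneOn_Ioc hv hvT ht), mul_right_comm]
  exact hscale t ht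

lemma setIntegral_Ioc_le_of_le_mul_div_rpow_s8 (hT : 0 < T) (hγ : 0 < γ)
    (hv : AntitoneOn v (Ioc 0 T)) (hvT : 0 ≤ v T)
    (hscale : ∀ t ∈ Ioc 0 T, v t ≤ c * (T / t) ^ (1 - γ) * v T) :
    ∫ t in Ioc 0 T, v t ≤ c / γ * T * v T := by
  calc ∫ t in Ioc 0 T, v t ≤ ∫ t in Ioc 0 T, c * v T * (T / t) ^ (1 - γ) :=
        setIntegral_mono_on (integrableOn_Ioc_of_le_mul_div_rpow hT hγ hv hvT hscale)
          ((integrableOn_Ioc_div_rpow hT hγ).const_mul _) measurableSet_Ioc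
          (fun t ht => (hscale t ht).trans_eq (by ring))
    _ = c / γ * T * v T := by rw [integral_const_mul, integral_Ioc_div_rpow hT hγ]; ring

lemma integrableOn_Ioc_mul_self_mul (hw : AntitoneOn w (Ioc 0 T)) (hwT : 0 ≤ w T)
    (hwmul : ∀ t ∈ Ioc 0 T, t * w t ≤ T * w T) (hvint : IntegrableOn v (Ioc 0 T))
    (hv_nonneg : ∀ t ∈ Ioc 0 T, 0 ≤ v t) :
    IntegrableOn (fun t => w t * t * v t) (Ioc 0 T) := by
  have hw_meas : AEMeasurable w (volume.restrict (Ioc 0 T)) :=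
    aemeasurable_restrict_of_antitoneOn measurableSet_Ioc hw
  refine Integrable.mono' (hvint.const_mul (T * w T))
    ((hw_meas.mul measurable_id.aemeasurable).mul hvint.aemeasurable).aestronglyMeasurable ?_
  filter_upwards [ae_restrict_mem measurableSet_Ioc] with t ht
  have hwt : 0 ≤ w t := nonneg_of_antitoneOn_Ioc hw hwT ht
  rw [Real.norm_of_nonneg (by have := ht.1; have := hv_nonneg t ht; positivity), mul_comm (w t)]
  exact mul_le_mul_of_nonneg_right (hwmul t ht) (hv_nonneg t ht)

lemma le_setIntegral_Ioc_mul_self_mul (hT : 0 < T) (hw : AntitoneOn w (Ioc 0 T))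
    (hwT : 0 ≤ w T) (hv : AntitoneOn v (Ioc 0 T)) (hvT : 0 ≤ v T)
    (hint : IntegrableOn (fun t => w t * t * v t) (Ioc 0 T)) :
    T ^ 2 * w T * v T / 4 ≤ ∫ t in Ioc 0 T, w t * t * v t := by
  have hsub : Ioc (T / 2) T ⊆ Ioc 0 T := Ioc_subset_Ioc_left (by linarith)
  have hlow : ∀ t ∈ Ioc (T / 2) T, w T * (T / 2) * v T ≤ w t * t * v t := fun t ht => by
    have ht' := hsub ht
    have hwt : w T ≤ w t := hw ht' ⟨hT, le_rfl⟩ ht.2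
    have hvt : v T ≤ v t := hv ht' ⟨hT, le_rfl⟩ ht.2
    have hTt : T / 2 ≤ t := ht.1.le
    have hwt0 : 0 ≤ w t := hwT.trans hwt
    have := ht'.1
    gcongr
  calc T ^ 2 * w T * v T / 4 = (volume.real (Ioc (T / 2) T)) • (w T * (T / 2) * v T) := by
        rw [measureReal_def, Real.volume_Ioc, ENNReal.toReal_ofReal (by linarith), smul_eq_mul]
        ring
    _ ≤ ∫ t in Ioc (T / 2) T, w t * t * v t :=
        setIntegral_ge_of_const_le measurableSet_Ioc measure_Ioc_lt_top.ne hlow (hint.mono_set hsub)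
    _ ≤ ∫ t in Ioc 0 T, w t * t * v t := by
        refine setIntegral_mono_set hint ?_ hsub.eventuallyLE
        filter_upwards [ae_restrict_mem measurableSet_Ioc] with t ht
        have hwt := nonneg_of_antitoneOn_Ioc hw hwT ht
        have hvt := nonneg_of_antitoneOn_Ioc hv hvT ht
        have := ht.1
        positivity

lemma setIntegral_Ioc_mul_self_mul_le (hwmul : ∀ t ∈ Ioc 0 T, t * w t ≤ T * w T)
    (hvint : IntegrableOn v (Ioc 0 T)) (hv_nonneg : ∀ t ∈ Ioc 0 T, 0 ≤ v t)
    (hint : IntegrableOn (fun t => w t * t * v t) (Ioc 0 T)) :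
    ∫ t in Ioc 0 T, w t * t * v t ≤ T * w T * ∫ t in Ioc 0 T, v t := by
  rw [← integral_const_mul]
  refine setIntegral_mono_on hint (hvint.const_mul _) measurableSet_Ioc fun t ht => ?_
  rw [mul_comm (w t)]
  exact mul_le_mul_of_nonneg_right (hwmul t ht) (hv_nonneg t ht)

lemma setIntegral_Ioc_mul_self_mul_bounds (hT : 0 < T) (hγ : 0 < γ)
    (hw : AntitoneOn w (Ioc 0 T)) (hwT : 0 ≤ w T) (hwmul : ∀ t ∈ Ioc 0 T, t * w t ≤ T * w T)
    (hv : AntitoneOn v (Ioc 0 T)) (hvT : 0 ≤ v T)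
    (hscale : ∀ t ∈ Ioc 0 T, v t ≤ c * (T / t) ^ (1 - γ) * v T) :
    T ^ 2 * w T * v T / 4 ≤ ∫ t in Ioc 0 T, w t * t * v t ∧
      ∫ t in Ioc 0 T, w t * t * v t ≤ c / γ * (T ^ 2 * w T * v T) := by
  have hv_nonneg : ∀ t ∈ Ioc 0 T, 0 ≤ v t := fun t ht => nonneg_of_antitoneOn_Ioc hv hvT ht
  have hvint := integrableOn_Ioc_of_le_mul_div_rpow hT hγ hv hvT hscale
  have hint := integrableOn_Ioc_mul_self_mul hw hwT hwmul hvint hv_nonneg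
  refine ⟨le_setIntegral_Ioc_mul_self_mul hT hw hwT hv hvT hint, ?_⟩
  calc ∫ t in Ioc 0 T, w t * t * v t ≤ T * w T * ∫ t in Ioc 0 T, v t :=
        setIntegral_Ioc_mul_self_mul_le hwmul hvint hv_nonneg hint
    _ ≤ T * w T * (c / γ * T * v T) := by
        gcongr
        exact setIntegral_Ioc_le_of_le_mul_div_rpow_s8 hT hγ hv hvT hscale
    _ = c / γ * (T ^ 2 * w T * v T) := by ring

end IntegralsOverIoc

lemma min_sqrt_div_mul_sqrt (α t : ℝ) : min (√α / √t) 1 * √t = min √α √t := by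
  rcases (Real.sqrt_nonneg t).eq_or_lt with h | h
  · rw [← h, mul_zero, min_eq_right (Real.sqrt_nonneg α)]
  · rw [min_mul_of_nonneg _ _ h.le, div_mul_cancel₀ _ h.ne', one_mul]

lemma antitoneOn_min_sqrt_div_mul (α β : ℝ) :
    AntitoneOn (fun t => min (√α / √t) 1 * min (√β / √t) 1) (Ioi 0) := fun _ hs _ _ hst => by
  have := Real.sqrt_pos.2 hs
  have := Real.sqrt_le_sqrt hst
  dsimp only
  gcongr

lemma mul_min_sqrt_div_mul_le (α β : ℝ) {t T : ℝ} (ht : 0 ≤ t) (htT : t ≤ T) :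
    t * (min (√α / √t) 1 * min (√β / √t) 1) ≤ T * (min (√α / √T) 1 * min (√β / √T) 1) := by
  have key : ∀ s, 0 ≤ s → s * (min (√α / √s) 1 * min (√β / √s) 1) = min √α √s * min √β √s := by
    intro s hs
    rw [← min_sqrt_div_mul_sqrt, ← min_sqrt_div_mul_sqrt]
    nth_rw 1 [← Real.mul_self_sqrt hs]
    ring
  rw [key t ht, key T (ht.trans htT)]
  have := Real.sqrt_le_sqrt htT
  gcongr

lemma min_inv_pow_div_eq_right {Φ Φinv : ℝ → ℝ} (hΦ : StrictMonoOn Φ (Ioi 0)) (d : ℕ)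
    {r t : ℝ} (hr : 0 < r) (ht : t ∈ Ioc 0 (Φ r)) (hinv : 0 < Φinv t) (hright : Φ (Φinv t) = t) :
    min ((Φinv t ^ d)⁻¹) (t / (r ^ d * Φ r)) = t / (r ^ d * Φ r) := by
  have hle : Φinv t ≤ r := (hΦ.le_iff_le hinv hr).1 (hright.trans_le ht.2)
  have hΦr : 0 < Φ r := ht.1.trans_le ht.2
  refine min_eq_right ?_
  calc t / (r ^ d * Φ r) ≤ Φ r / (r ^ d * Φ r) := by gcongr; exact ht.2
    _ = (r ^ d)⁻¹ := by field_simp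
    _ ≤ (Φinv t ^ d)⁻¹ := by gcongr

lemma setIntegral_Ioc_min_inv_pow_div_eq {Φ Φinv : ℝ → ℝ} (hΦ : StrictMonoOn Φ (Ioi 0))
    (hinvpos : ∀ y : ℝ, 0 < y → 0 < Φinv y) (hright : ∀ y : ℝ, 0 < y → Φ (Φinv y) = y)
    (d : ℕ) (f v : ℝ → ℝ) {r : ℝ} (hr : 0 < r) :
    ∫ t in Ioc 0 (Φ r), f t * min ((Φinv t ^ d)⁻¹) (t / (r ^ d * Φ r)) * v t =
      (r ^ d * Φ r)⁻¹ * ∫ t in Ioc 0 (Φ r), f t * t * v t := by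
  rw [← integral_const_mul]
  refine setIntegral_congr_fun measurableSet_Ioc fun t ht => ?_
  rw [min_inv_pow_div_eq_right hΦ d hr ht (hinvpos t ht.1) (hright t ht.1)]
  have : 0 < Φ r := ht.1.trans_le ht.2
  field_simp

theorem stmt_8_general (d : ℕ)
    (Φ Φinv : ℝ → ℝ)
    (hΦpos : ∀ x : ℝ, 0 < x → 0 < Φ x)
    (hΦmono : StrictMonoOn Φ (Set.Ioi 0))
    (hinvpos : ∀ y : ℝ, 0 < y → 0 < Φinv y)
    (hright : ∀ y : ℝ, 0 < y → Φ (Φinv y) = y)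
    (v : ℝ → ℝ) (hv_pos : ∀ t : ℝ, 0 < t → 0 < v t)
    (hv_anti : AntitoneOn v (Set.Ioi 0))
    (c₁ c₂ γ₁ γ₂ : ℝ)
    (hγ₁ : 0 < γ₁)
    (hv_scale : ∀ t s : ℝ, 0 < t → t ≤ s →
      c₁ * (s / t) ^ (1 - γ₂) ≤ v t / v s ∧ v t / v s ≤ c₂ * (s / t) ^ (1 - γ₁)) :
    ∃ C : ℝ, 1 ≤ C ∧ ∀ a b r : ℝ, 0 < a → 0 < b → 0 < r →
      C⁻¹ * (min (Real.sqrt (Φ a) / Real.sqrt (Φ r)) 1 *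
              min (Real.sqrt (Φ b) / Real.sqrt (Φ r)) 1 *
              (Φ r * v (Φ r) / r ^ d)) ≤
        (∫ t in Set.Ioc (0 : ℝ) (Φ r),
          min (Real.sqrt (Φ a) / Real.sqrt t) 1 *
            min (Real.sqrt (Φ b) / Real.sqrt t) 1 *
            min ((Φinv t ^ d)⁻¹) (t / (r ^ d * Φ r)) * v t) ∧
      (∫ t in Set.Ioc (0 : ℝ) (Φ r),
          min (Real.sqrt (Φ a) / Real.sqrt t) 1 *
            min (Real.sqrt (Φ b) / Real.sqrt t) 1 *
            min ((Φinv t ^ d)⁻¹) (t / (r ^ d * Φ r)) * v t) ≤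
        C * (min (Real.sqrt (Φ a) / Real.sqrt (Φ r)) 1 *
              min (Real.sqrt (Φ b) / Real.sqrt (Φ r)) 1 *
              (Φ r * v (Φ r) / r ^ d)) := by
  refine ⟨max 4 (c₂ / γ₁), le_max_of_le_left (by norm_num), fun a b r _ _ hr => ?_⟩
  set w : ℝ → ℝ := fun t => min (√(Φ a) / √t) 1 * min (√(Φ b) / √t) 1
  have hT : 0 < Φ r := hΦpos r hr
  obtain ⟨hlow, hup⟩ := setIntegral_Ioc_mul_self_mul_bounds (w := w) hT hγ₁
    ((antitoneOn_min_sqrt_div_mul (Φ a) (Φ b)).mono Ioc_subset_Ioi_self) (by positivity)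
    (fun t ht => mul_min_sqrt_div_mul_le (Φ a) (Φ b) ht.1.le ht.2)
    (hv_anti.mono Ioc_subset_Ioi_self) (hv_pos _ hT).le
    (fun t ht => (div_le_iff₀ (hv_pos _ hT)).1 (hv_scale t _ ht.1 ht.2).2)
  rw [setIntegral_Ioc_min_inv_pow_div_eq hΦmono hinvpos hright d w v hr]
  have hrd : 0 < r ^ d := pow_pos hr d
  have hvT := hv_pos _ hT
  change _ * (w (Φ r) * _) ≤ _ ∧ _ ≤ _ * (w (Φ r) * _)
  constructor
  · calc (max 4 (c₂ / γ₁))⁻¹ * (w (Φ r) * (Φ r * v (Φ r) / r ^ d))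
          ≤ 4⁻¹ * (w (Φ r) * (Φ r * v (Φ r) / r ^ d)) := by gcongr; exact le_max_left _ _
      _ = (r ^ d * Φ r)⁻¹ * (Φ r ^ 2 * w (Φ r) * v (Φ r) / 4) := by field_simp
      _ ≤ _ := by gcongr
  · calc _ ≤ (r ^ d * Φ r)⁻¹ * (c₂ / γ₁ * (Φ r ^ 2 * w (Φ r) * v (Φ r))) := by gcongr
      _ = c₂ / γ₁ * (w (Φ r) * (Φ r * v (Φ r) / r ^ d)) := by field_simp
      _ ≤ _ := by gcongr; exact le_max_right _ _

/-- Lemma 6.3 of the paper: two-sided estimate on the small-time Green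
function integral against the potential density `v`. -/
theorem stmt_8 (d : ℕ) (hd : 1 ≤ d)
    (Φ Φinv : ℝ → ℝ)
    (hΦpos : ∀ x : ℝ, 0 < x → 0 < Φ x)
    (hΦmono : StrictMonoOn Φ (Set.Ioi 0))
    (hΦbij : Set.BijOn Φ (Set.Ioi 0) (Set.Ioi 0))
    (hinvpos : ∀ y : ℝ, 0 < y → 0 < Φinv y)
    (hleft : ∀ x : ℝ, 0 < x → Φinv (Φ x) = x)
    (hright : ∀ y : ℝ, 0 < y → Φ (Φinv y) = y)
    (v : ℝ → ℝ) (hv_pos : ∀ t : ℝ, 0 < t → 0 < v t)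
    (hv_anti : AntitoneOn v (Set.Ioi 0))
    (c₁ c₂ γ₁ γ₂ : ℝ) (hc₁ : 0 < c₁) (hc₂ : 0 < c₂)
    (hγ₁ : 0 < γ₁) (hγ : γ₁ ≤ γ₂) (hγ₂ : γ₂ < 1)
    (hv_scale : ∀ t s : ℝ, 0 < t → t ≤ s →
      c₁ * (s / t) ^ (1 - γ₂) ≤ v t / v s ∧ v t / v s ≤ c₂ * (s / t) ^ (1 - γ₁)) :
    ∃ C : ℝ, 1 ≤ C ∧ ∀ a b r : ℝ, 0 < a → 0 < b → 0 < r →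
      C⁻¹ * (min (Real.sqrt (Φ a) / Real.sqrt (Φ r)) 1 *
              min (Real.sqrt (Φ b) / Real.sqrt (Φ r)) 1 *
              (Φ r * v (Φ r) / r ^ d)) ≤
        (∫ t in Set.Ioc (0 : ℝ) (Φ r),
          min (Real.sqrt (Φ a) / Real.sqrt t) 1 *
            min (Real.sqrt (Φ b) / Real.sqrt t) 1 *
            min ((Φinv t ^ d)⁻¹) (t / (r ^ d * Φ r)) * v t) ∧
      (∫ t in Set.Ioc (0 : ℝ) (Φ r),
          min (Real.sqrt (Φ a) / Real.sqrt t) 1 *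
            min (Real.sqrt (Φ b) / Real.sqrt t) 1 *
            min ((Φinv t ^ d)⁻¹) (t / (r ^ d * Φ r)) * v t) ≤
        C * (min (Real.sqrt (Φ a) / Real.sqrt (Φ r)) 1 *
              min (Real.sqrt (Φ b) / Real.sqrt (Φ r)) 1 *
              (Φ r * v (Φ r) / r ^ d)) :=
  stmt_8_general d Φ Φinv hΦpos hΦmono hinvpos hright v hv_pos hv_anti c₁ c₂ γ₁ γ₂ hγ₁ hv_scale
end

section
/- Let Φ : (0,∞) → (0,∞) be nondecreasing and satisfy the global weak scaling condition with exponents 2δ₁, 2δ₂ (0 < δ₁ ≤ δ₂ < 1), and let ψ : (0,∞) → (0,∞) be nondecreasing and satisfy the global weak scaling condition with exponents γ₁, γ₂ where 1/2 < γ₁ ≤ γ₂ < 1. Then there exists a constant C > 0 such that for every r > 0, ∫₀^r ds/( s·Φ(s)^{1/2}·ψ(Φ(s)⁻¹) ) ≤ C/( Φ(r)^{1/2}·ψ(Φ(r)⁻¹) ). -/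
open MeasureTheory Set

/-!
Write `H u = ψ u / √u`. Lower scaling of `ψ` with index `γ₁ > 1/2` gives `H` lower scaling with
positive index `γ₁ - 1/2`; since `u = Φ(s)⁻¹` grows at least like `s ^ (-2δ₁)` as `s → 0`, the
denominator `√(Φ s) ψ(Φ(s)⁻¹) = H(Φ(s)⁻¹)` blows up at least like `(r / s) ^ ε` as `s → 0`, with
`ε = 2δ₁(γ₁ - 1/2) > 0`. The integrand is then dominated by a multiple of `s ^ (ε - 1)`, which is
integrable at `0`.
-/

def LowerWeakScaling (f : ℝ → ℝ) (c α : ℝ) : Prop :=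
  ∀ r R : ℝ, 0 < r → r ≤ R → c * (R / r) ^ α ≤ f R / f r

namespace LowerWeakScaling

variable {f : ℝ → ℝ} {c α : ℝ}

theorem div_rpow (hf : LowerWeakScaling f c α) (β : ℝ) :
    LowerWeakScaling (fun u => f u / u ^ β) c (α - β) := by
  intro r R hr hrR
  have hRr : 0 < R / r := div_pos (hr.trans_le hrR) hr
  calc c * (R / r) ^ (α - β) = c * (R / r) ^ α / (R / r) ^ β := by
        rw [Real.rpow_sub hRr, mul_div_assoc]
    _ ≤ f R / f r / (R / r) ^ β := by gcongr; exact hf r R hr hrR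
    _ = f R / R ^ β / (f r / r ^ β) := by
        rw [Real.div_rpow (hr.trans_le hrR).le hr.le]; ring

theorem le_comp_inv {Φ : ℝ → ℝ} {b β : ℝ} (hf : LowerWeakScaling f b β)
    (hfpos : ∀ u, 0 < u → 0 < f u) (hb : 0 ≤ b) (hβ : 0 ≤ β)
    (hΦ : LowerWeakScaling Φ c α) (hc : 0 ≤ c) (hΦpos : ∀ x, 0 < x → 0 < Φ x)
    (hΦmono : MonotoneOn Φ (Ioi 0)) {s r : ℝ} (hs : 0 < s) (hsr : s ≤ r) :
    b * c ^ β * (r / s) ^ (α * β) * f (Φ r)⁻¹ ≤ f (Φ s)⁻¹ := by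
  have hr : 0 < r := hs.trans_le hsr
  have hinv : (Φ r)⁻¹ ≤ (Φ s)⁻¹ := inv_anti₀ (hΦpos s hs) (hΦmono hs hr hsr)
  have hfr : 0 < f (Φ r)⁻¹ := hfpos _ (inv_pos.2 (hΦpos r hr))
  have hψ : b * (Φ r / Φ s) ^ β ≤ f (Φ s)⁻¹ / f (Φ r)⁻¹ := by
    simpa only [inv_div_inv] using hf _ _ (inv_pos.2 (hΦpos r hr)) hinv
  have hΦβ : c ^ β * (r / s) ^ (α * β) ≤ (Φ r / Φ s) ^ β := by
    rw [Real.rpow_mul (by positivity), ← Real.mul_rpow hc (by positivity)]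
    exact Real.rpow_le_rpow (by positivity) (hΦ s r hs hsr) hβ
  calc b * c ^ β * (r / s) ^ (α * β) * f (Φ r)⁻¹
      ≤ b * (Φ r / Φ s) ^ β * f (Φ r)⁻¹ := by rw [mul_assoc b]; gcongr
    _ ≤ f (Φ s)⁻¹ := (le_div_iff₀ hfr).1 hψ

end LowerWeakScaling

theorem setIntegral_Ioc_le_of_le_mul_rpow {f : ℝ → ℝ} {r ε A : ℝ} (hr : 0 < r) (hε : 0 < ε)
    (hf0 : ∀ s ∈ Ioc 0 r, 0 ≤ f s) (hf : ∀ s ∈ Ioc 0 r, f s ≤ A * s ^ (ε - 1)) :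
    ∫ s in Ioc 0 r, f s ≤ A * (r ^ ε / ε) := by
  have hε1 : (-1 : ℝ) < ε - 1 := by linarith
  have hint : IntegrableOn (fun s : ℝ => A * s ^ (ε - 1)) (Ioc 0 r) :=
    (intervalIntegrable_iff_integrableOn_Ioc_of_le hr.le).mp
      ((intervalIntegral.intervalIntegrable_rpow' hε1).const_mul A)
  calc ∫ s in Ioc 0 r, f s ≤ ∫ s in Ioc 0 r, A * s ^ (ε - 1) :=
        integral_mono_of_nonneg (ae_restrict_of_forall_mem measurableSet_Ioc hf0) hint
          (ae_restrict_of_forall_mem measurableSet_Ioc hf)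
    _ = A * (r ^ ε / ε) := by
        rw [← intervalIntegral.integral_of_le hr.le, intervalIntegral.integral_const_mul,
          integral_rpow (Or.inl hε1), sub_add_cancel, Real.zero_rpow hε.ne', sub_zero]

theorem setIntegral_Ioc_one_div_mul_le {D : ℝ → ℝ} {r ε K : ℝ} (hr : 0 < r) (hε : 0 < ε)
    (hK : 0 < K) (hDr : 0 < D r) (hD : ∀ s ∈ Ioc 0 r, K * (r / s) ^ ε * D r ≤ D s) :
    ∫ s in Ioc 0 r, 1 / (s * D s) ≤ 1 / (ε * K) / D r := by
  have hbound : ∀ s ∈ Ioc 0 r, 1 / (s * D s) ≤ (K * r ^ ε * D r)⁻¹ * s ^ (ε - 1) := by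
    intro s hs
    have hs0 : 0 < s := hs.1
    calc 1 / (s * D s) ≤ 1 / (s * (K * (r / s) ^ ε * D r)) :=
          one_div_le_one_div_of_le (by positivity) (by gcongr; exact hD s hs)
      _ = (K * r ^ ε * D r)⁻¹ * s ^ (ε - 1) := by
          rw [Real.div_rpow hr.le hs0.le, Real.rpow_sub_one hs0.ne']
          field_simp
  have hpos : ∀ s ∈ Ioc 0 r, 0 ≤ 1 / (s * D s) := fun s hs =>
    have : 0 < K * (r / s) ^ ε * D r := by have := hs.1; positivity
    one_div_nonneg.2 (mul_nonneg hs.1.le (this.le.trans (hD s hs)))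
  calc ∫ s in Ioc 0 r, 1 / (s * D s) ≤ (K * r ^ ε * D r)⁻¹ * (r ^ ε / ε) :=
        setIntegral_Ioc_le_of_le_mul_rpow hr hε hpos hbound
    _ = 1 / (ε * K) / D r := by field_simp

theorem div_sqrt_inv_eq_sqrt_mul {x : ℝ} (hx : 0 < x) (y : ℝ) :
    y / x⁻¹ ^ (1 / 2 : ℝ) = Real.sqrt x * y := by
  rw [Real.inv_rpow hx.le, ← Real.sqrt_eq_rpow, div_inv_eq_mul, mul_comm]

theorem stmt_12_general (Φ : ℝ → ℝ)
    (hΦpos : ∀ x : ℝ, 0 < x → 0 < Φ x)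
    (hΦmono : MonotoneOn Φ (Set.Ioi 0))
    (c₁ c₂ δ₁ δ₂ : ℝ) (hc₁ : 0 < c₁)
    (hδ₁ : 0 < δ₁)
    (hΦscale : ∀ r R : ℝ, 0 < r → r ≤ R →
      c₁ * (R / r) ^ (2 * δ₁) ≤ Φ R / Φ r ∧ Φ R / Φ r ≤ c₂ * (R / r) ^ (2 * δ₂))
    (ψ : ℝ → ℝ) (hψpos : ∀ x : ℝ, 0 < x → 0 < ψ x)
    (b₁ b₂ γ₁ γ₂ : ℝ) (hb₁ : 0 < b₁)
    (hγ₁ : 1 / 2 < γ₁)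
    (hψscale : ∀ r R : ℝ, 0 < r → r ≤ R →
      b₁ * (R / r) ^ γ₁ ≤ ψ R / ψ r ∧ ψ R / ψ r ≤ b₂ * (R / r) ^ γ₂) :
    ∃ C : ℝ, 0 < C ∧ ∀ r : ℝ, 0 < r →
      ∫ s in Set.Ioc (0 : ℝ) r, 1 / (s * Real.sqrt (Φ s) * ψ ((Φ s)⁻¹)) ≤
        C / (Real.sqrt (Φ r) * ψ ((Φ r)⁻¹)) := by
  have hΦ : LowerWeakScaling Φ c₁ (2 * δ₁) := fun r R hr hrR => (hΦscale r R hr hrR).1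
  have hH : LowerWeakScaling (fun u => ψ u / u ^ (1 / 2 : ℝ)) b₁ (γ₁ - 1 / 2) :=
    LowerWeakScaling.div_rpow (fun r R hr hrR => (hψscale r R hr hrR).1) _
  have hHpos : ∀ u, 0 < u → 0 < ψ u / u ^ (1 / 2 : ℝ) := fun u hu =>
    div_pos (hψpos u hu) (Real.rpow_pos_of_pos hu _)
  have hε : 0 < 2 * δ₁ * (γ₁ - 1 / 2) := mul_pos (by positivity) (by linarith)
  have hK : 0 < b₁ * c₁ ^ (γ₁ - 1 / 2) := mul_pos hb₁ (Real.rpow_pos_of_pos hc₁ _)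
  refine ⟨1 / (2 * δ₁ * (γ₁ - 1 / 2) * (b₁ * c₁ ^ (γ₁ - 1 / 2))), by positivity, fun r hr => ?_⟩
  simp only [mul_assoc (_ : ℝ) (Real.sqrt _)]
  refine setIntegral_Ioc_one_div_mul_le hr hε hK
    (mul_pos (Real.sqrt_pos.2 (hΦpos r hr)) (hψpos _ (inv_pos.2 (hΦpos r hr)))) fun s hs => ?_
  have h := hH.le_comp_inv hHpos hb₁.le (by linarith) hΦ hc₁.le hΦpos hΦmono hs.1 hs.2
  rwa [div_sqrt_inv_eq_sqrt_mul (hΦpos s hs.1), div_sqrt_inv_eq_sqrt_mul (hΦpos r hr)] at h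

/-- the radial integral estimate
`∫₀^r ds/(s·Φ(s)^{1/2}·ψ(Φ(s)⁻¹)) ≤ C/(Φ(r)^{1/2}·ψ(Φ(r)⁻¹))` when the lower weak scaling
index of `ψ` exceeds `1/2`. -/
theorem stmt_12 (Φ : ℝ → ℝ)
    (hΦpos : ∀ x : ℝ, 0 < x → 0 < Φ x)
    (hΦmono : MonotoneOn Φ (Set.Ioi 0))
    (c₁ c₂ δ₁ δ₂ : ℝ) (hc₁ : 0 < c₁) (hc₂ : 0 < c₂)
    (hδ₁ : 0 < δ₁) (hδ : δ₁ ≤ δ₂) (hδ₂ : δ₂ < 1)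
    (hΦscale : ∀ r R : ℝ, 0 < r → r ≤ R →
      c₁ * (R / r) ^ (2 * δ₁) ≤ Φ R / Φ r ∧ Φ R / Φ r ≤ c₂ * (R / r) ^ (2 * δ₂))
    (ψ : ℝ → ℝ) (hψpos : ∀ x : ℝ, 0 < x → 0 < ψ x)
    (hψmono : MonotoneOn ψ (Set.Ioi 0))
    (b₁ b₂ γ₁ γ₂ : ℝ) (hb₁ : 0 < b₁) (hb₂ : 0 < b₂)
    (hγ₁ : 1 / 2 < γ₁) (hγ : γ₁ ≤ γ₂) (hγ₂ : γ₂ < 1)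
    (hψscale : ∀ r R : ℝ, 0 < r → r ≤ R →
      b₁ * (R / r) ^ γ₁ ≤ ψ R / ψ r ∧ ψ R / ψ r ≤ b₂ * (R / r) ^ γ₂) :
    ∃ C : ℝ, 0 < C ∧ ∀ r : ℝ, 0 < r →
      ∫ s in Set.Ioc (0 : ℝ) r, 1 / (s * Real.sqrt (Φ s) * ψ ((Φ s)⁻¹)) ≤
        C / (Real.sqrt (Φ r) * ψ ((Φ r)⁻¹)) :=
  stmt_12_general Φ hΦpos hΦmono c₁ c₂ δ₁ δ₂ hc₁ hδ₁ hΦscale ψ hψpos b₁ b₂ γ₁ γ₂ hb₁ hγ₁ hψscale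
end

section
/- Let Φ : (0,∞) → (0,∞) be nondecreasing and satisfy the global weak scaling condition with exponents 2δ₁, 2δ₂ (0 < δ₁ ≤ δ₂ < 1), and let ψ : (0,∞) → (0,∞) be nondecreasing and satisfy the global weak scaling condition with exponents γ₁, γ₂ (0 < γ₁ ≤ γ₂ < 1). Then there exists a constant C > 0 such that for every r > 0, ∫₀^r ds/( s·ψ(Φ(s)⁻¹) ) ≥ C/ψ(Φ(r)⁻¹). -/
/-!
Write `g s = ψ ((Φ s)⁻¹)`, a nonincreasing function of `s`. Composing the lower scaling bounds of
`Φ` and `ψ` gives `g s ≳ (r / s) ^ (2 δ₁ γ₁) g r` for `s ≤ r`, so the integrand `1 / (s g s)` is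
`O(s ^ (2 δ₁ γ₁ - 1))` near `0` and is integrable on `(0, r]`. Composing the upper bounds shows that
`g` is doubling, `g (r / 2) ≤ K g r`; hence the integral over `(r / 2, r]` alone is at least
`1 / (2 g (r / 2)) ≥ 1 / (2 K g r)`.
-/

open MeasureTheory Set

def LowerScaling (f : ℝ → ℝ) (c α : ℝ) : Prop :=
  ∀ r R : ℝ, 0 < r → r ≤ R → c * (R / r) ^ α ≤ f R / f r

def UpperScaling (f : ℝ → ℝ) (c α : ℝ) : Prop :=
  ∀ r R : ℝ, 0 < r → r ≤ R → f R / f r ≤ c * (R / r) ^ α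

section Composition

variable {Φ ψ : ℝ → ℝ} {b c α β s r : ℝ}

theorem mul_rpow_rpow_of_nonneg (hc : 0 ≤ c) {x : ℝ} (hx : 0 ≤ x) :
    (c * x ^ α) ^ β = c ^ β * x ^ (α * β) := by
  rw [Real.mul_rpow hc (Real.rpow_nonneg hx _), Real.rpow_mul hx]

theorem LowerScaling.le_div_comp_inv (hΦ : LowerScaling Φ c α) (hψ : LowerScaling ψ b β)
    (hΦpos : ∀ x, 0 < x → 0 < Φ x) (hΦmono : MonotoneOn Φ (Ioi 0))
    (hc : 0 ≤ c) (hb : 0 ≤ b) (hβ : 0 ≤ β) (hs : 0 < s) (hsr : s ≤ r) :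
    b * c ^ β * (r / s) ^ (α * β) ≤ ψ (Φ s)⁻¹ / ψ (Φ r)⁻¹ := by
  have hr : 0 < r := hs.trans_le hsr
  have hψ' := hψ _ _ (inv_pos.2 (hΦpos r hr)) (inv_anti₀ (hΦpos s hs) (hΦmono hs hr hsr))
  rw [inv_div_inv] at hψ'
  calc b * c ^ β * (r / s) ^ (α * β) = b * (c * (r / s) ^ α) ^ β := by
        rw [mul_rpow_rpow_of_nonneg hc (div_pos hr hs).le, mul_assoc]
    _ ≤ b * (Φ r / Φ s) ^ β := by
        gcongr
        exact hΦ s r hs hsr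
    _ ≤ ψ (Φ s)⁻¹ / ψ (Φ r)⁻¹ := hψ'

theorem UpperScaling.div_comp_inv_le (hΦ : UpperScaling Φ c α) (hψ : UpperScaling ψ b β)
    (hΦpos : ∀ x, 0 < x → 0 < Φ x) (hΦmono : MonotoneOn Φ (Ioi 0))
    (hc : 0 ≤ c) (hb : 0 ≤ b) (hβ : 0 ≤ β) (hs : 0 < s) (hsr : s ≤ r) :
    ψ (Φ s)⁻¹ / ψ (Φ r)⁻¹ ≤ b * c ^ β * (r / s) ^ (α * β) := by
  have hr : 0 < r := hs.trans_le hsr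
  have hψ' := hψ _ _ (inv_pos.2 (hΦpos r hr)) (inv_anti₀ (hΦpos s hs) (hΦmono hs hr hsr))
  rw [inv_div_inv] at hψ'
  have := hΦpos s hs
  have := hΦpos r hr
  calc ψ (Φ s)⁻¹ / ψ (Φ r)⁻¹ ≤ b * (Φ r / Φ s) ^ β := hψ'
    _ ≤ b * (c * (r / s) ^ α) ^ β := by
        gcongr
        exact hΦ s r hs hsr
    _ = b * c ^ β * (r / s) ^ (α * β) := by
        rw [mul_rpow_rpow_of_nonneg hc (div_pos hr hs).le, mul_assoc]

end Composition

section RadialIntegral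

variable {g : ℝ → ℝ} {r : ℝ}

theorem integrableOn_Ioc_one_div_mul_of_mul_rpow_le (hr : 0 < r) (hg : AntitoneOn g (Ioc 0 r))
    {a p : ℝ} (ha : 0 < a) (hp : 0 < p) (hlow : ∀ s ∈ Ioc 0 r, a * (r / s) ^ p ≤ g s) :
    IntegrableOn (fun s => 1 / (s * g s)) (Ioc 0 r) := by
  have hmeas : AEStronglyMeasurable (fun s => 1 / (s * g s)) (volume.restrict (Ioc 0 r)) := by
    simp only [one_div]
    exact (aemeasurable_id.mul
      (aemeasurable_restrict_of_antitoneOn measurableSet_Ioc hg)).inv.aestronglyMeasurable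
  have hmajorant : IntegrableOn (fun s => (a * r ^ p)⁻¹ * s ^ (p - 1)) (Ioc 0 r) := by
    rw [integrableOn_Ioc_iff_integrableOn_Ioo]
    exact ((intervalIntegral.integrableOn_Ioo_rpow_iff hr).2 (by linarith)).const_mul _
  refine hmajorant.mono' hmeas ?_
  filter_upwards [ae_restrict_mem measurableSet_Ioc] with s hs
  have hs0 : 0 < s := hs.1
  have hgs : 0 < g s := lt_of_lt_of_le (by positivity) (hlow s hs)
  rw [Real.norm_eq_abs, abs_of_nonneg (by positivity)]
  calc 1 / (s * g s) ≤ 1 / (s * (a * (r / s) ^ p)) := by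
        gcongr
        exact hlow s hs
    _ = (a * r ^ p)⁻¹ * s ^ (p - 1) := by
        rw [Real.div_rpow hr.le hs0.le, Real.rpow_sub_one hs0.ne']
        field_simp

theorem one_div_two_mul_le_setIntegral_Ioc (hr : 0 < r) (hg : AntitoneOn g (Ioc 0 r))
    (hgr : 0 < g r) (hint : IntegrableOn (fun s => 1 / (s * g s)) (Ioc 0 r)) :
    1 / (2 * g (r / 2)) ≤ ∫ s in Ioc 0 r, 1 / (s * g s) := by
  have hr2 : r / 2 ∈ Ioc 0 r := ⟨by positivity, by linarith⟩
  have hr_mem : r ∈ Ioc 0 r := ⟨hr, le_rfl⟩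
  have hg_le : ∀ s ∈ Ioc 0 r, g r ≤ g s := fun s hs => hg hs hr_mem hs.2
  have hsub : Ioc (r / 2) r ⊆ Ioc 0 r := Ioc_subset_Ioc_left hr2.1.le
  have hgr2 : 0 < g (r / 2) := hgr.trans_le (hg_le _ hr2)
  have hconst : ∀ s ∈ Ioc (r / 2) r, 1 / (r * g (r / 2)) ≤ 1 / (s * g s) := by
    intro s hs
    have hs0 : 0 < s := hr2.1.trans hs.1
    have := hgr.trans_le (hg_le s (hsub hs))
    gcongr
    exacts [hs.2, hg hr2 (hsub hs) hs.1.le]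
  have hnonneg : 0 ≤ᵐ[volume.restrict (Ioc 0 r)] fun s => 1 / (s * g s) := by
    filter_upwards [ae_restrict_mem measurableSet_Ioc] with s hs
    have := hgr.trans_le (hg_le s hs)
    have := hs.1
    positivity
  calc 1 / (2 * g (r / 2)) = ∫ _ in Ioc (r / 2) r, 1 / (r * g (r / 2)) := by
        rw [setIntegral_const, Real.volume_real_Ioc, smul_eq_mul, max_eq_left (by linarith)]
        field_simp
        ring
    _ ≤ ∫ s in Ioc (r / 2) r, 1 / (s * g s) :=
        setIntegral_mono_on (integrableOn_const measure_Ioc_lt_top.ne) (hint.mono_set hsub)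
          measurableSet_Ioc hconst
    _ ≤ ∫ s in Ioc 0 r, 1 / (s * g s) := setIntegral_mono_set hint hnonneg hsub.eventuallyLE

end RadialIntegral

theorem stmt_13_general (Φ : ℝ → ℝ)
    (hΦpos : ∀ x : ℝ, 0 < x → 0 < Φ x)
    (hΦmono : MonotoneOn Φ (Set.Ioi 0))
    (c₁ c₂ δ₁ δ₂ : ℝ) (hc₁ : 0 < c₁) (hc₂ : 0 < c₂)
    (hδ₁ : 0 < δ₁)
    (hΦscale : ∀ r R : ℝ, 0 < r → r ≤ R →
      c₁ * (R / r) ^ (2 * δ₁) ≤ Φ R / Φ r ∧ Φ R / Φ r ≤ c₂ * (R / r) ^ (2 * δ₂))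
    (ψ : ℝ → ℝ) (hψpos : ∀ x : ℝ, 0 < x → 0 < ψ x)
    (hψmono : MonotoneOn ψ (Set.Ioi 0))
    (b₁ b₂ γ₁ γ₂ : ℝ) (hb₁ : 0 < b₁) (hb₂ : 0 < b₂)
    (hγ₁ : 0 < γ₁) (hγ : γ₁ ≤ γ₂)
    (hψscale : ∀ r R : ℝ, 0 < r → r ≤ R →
      b₁ * (R / r) ^ γ₁ ≤ ψ R / ψ r ∧ ψ R / ψ r ≤ b₂ * (R / r) ^ γ₂) :
    ∃ C : ℝ, 0 < C ∧ ∀ r : ℝ, 0 < r →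
      C / ψ ((Φ r)⁻¹) ≤ ∫ s in Set.Ioc (0 : ℝ) r, 1 / (s * ψ ((Φ s)⁻¹)) := by
  have hγ₂ : 0 ≤ γ₂ := hγ₁.le.trans hγ
  set K := b₂ * c₂ ^ γ₂ * 2 ^ (2 * δ₂ * γ₂)
  refine ⟨1 / (2 * K), by positivity, fun r hr => ?_⟩
  have hgpos : ∀ s, 0 < s → 0 < ψ (Φ s)⁻¹ := fun s hs => hψpos _ (inv_pos.2 (hΦpos s hs))
  have hganti : AntitoneOn (fun s => ψ (Φ s)⁻¹) (Ioc 0 r) := fun x hx y hy hxy =>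
    hψmono (inv_pos.2 (hΦpos y hy.1)) (inv_pos.2 (hΦpos x hx.1))
      (inv_anti₀ (hΦpos x hx.1) (hΦmono hx.1 hy.1 hxy))
  have hlow : ∀ s ∈ Ioc 0 r,
      b₁ * c₁ ^ γ₁ * ψ (Φ r)⁻¹ * (r / s) ^ (2 * δ₁ * γ₁) ≤ ψ (Φ s)⁻¹ := fun s hs => by
    have h := LowerScaling.le_div_comp_inv (fun r R h h' => (hΦscale r R h h').1)
      (fun r R h h' => (hψscale r R h h').1) hΦpos hΦmono hc₁.le hb₁.le hγ₁.le hs.1 hs.2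
    rw [le_div_iff₀ (hgpos r hr)] at h
    linarith
  have hdoubling : ψ (Φ (r / 2))⁻¹ ≤ K * ψ (Φ r)⁻¹ := by
    have h := UpperScaling.div_comp_inv_le (fun r R h h' => (hΦscale r R h h').2)
      (fun r R h h' => (hψscale r R h h').2) hΦpos hΦmono hc₂.le hb₂.le hγ₂ (half_pos hr)
      (half_le_self hr.le)
    rwa [div_le_iff₀ (hgpos r hr), div_div_cancel₀ hr.ne'] at h
  have hint := integrableOn_Ioc_one_div_mul_of_mul_rpow_le hr hganti
    (by have := hgpos r hr; positivity) (by positivity) hlow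
  calc 1 / (2 * K) / ψ (Φ r)⁻¹ = 1 / (2 * (K * ψ (Φ r)⁻¹)) := by ring
    _ ≤ 1 / (2 * ψ (Φ (r / 2))⁻¹) := by
        have := hgpos (r / 2) (half_pos hr)
        gcongr
    _ ≤ ∫ s in Ioc 0 r, 1 / (s * ψ (Φ s)⁻¹) :=
        one_div_two_mul_le_setIntegral_Ioc hr hganti (hgpos r hr) hint

/-- key computation in Lemma 4.4 of the paper: the radial integral lower bound
`∫₀^r ds/(s·ψ(Φ(s)⁻¹)) ≥ C/ψ(Φ(r)⁻¹)`. -/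
theorem stmt_13 (Φ : ℝ → ℝ)
    (hΦpos : ∀ x : ℝ, 0 < x → 0 < Φ x)
    (hΦmono : MonotoneOn Φ (Set.Ioi 0))
    (c₁ c₂ δ₁ δ₂ : ℝ) (hc₁ : 0 < c₁) (hc₂ : 0 < c₂)
    (hδ₁ : 0 < δ₁) (hδ : δ₁ ≤ δ₂) (hδ₂ : δ₂ < 1)
    (hΦscale : ∀ r R : ℝ, 0 < r → r ≤ R →
      c₁ * (R / r) ^ (2 * δ₁) ≤ Φ R / Φ r ∧ Φ R / Φ r ≤ c₂ * (R / r) ^ (2 * δ₂))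
    (ψ : ℝ → ℝ) (hψpos : ∀ x : ℝ, 0 < x → 0 < ψ x)
    (hψmono : MonotoneOn ψ (Set.Ioi 0))
    (b₁ b₂ γ₁ γ₂ : ℝ) (hb₁ : 0 < b₁) (hb₂ : 0 < b₂)
    (hγ₁ : 0 < γ₁) (hγ : γ₁ ≤ γ₂) (hγ₂ : γ₂ < 1)
    (hψscale : ∀ r R : ℝ, 0 < r → r ≤ R →
      b₁ * (R / r) ^ γ₁ ≤ ψ R / ψ r ∧ ψ R / ψ r ≤ b₂ * (R / r) ^ γ₂) :
    ∃ C : ℝ, 0 < C ∧ ∀ r : ℝ, 0 < r →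
      C / ψ ((Φ r)⁻¹) ≤ ∫ s in Set.Ioc (0 : ℝ) r, 1 / (s * ψ ((Φ s)⁻¹)) :=
  stmt_13_general Φ hΦpos hΦmono c₁ c₂ δ₁ δ₂ hc₁ hc₂ hδ₁ hΦscale ψ hψpos hψmono b₁ b₂ γ₁ γ₂ hb₁ hb₂
    hγ₁ hγ hψscale
end

section
/- Fix D* > 0. Let Φ : (0,∞) → (0,∞) be nondecreasing and satisfy the global weak scaling condition with exponents 2δ₁, 2δ₂ (0 < δ₁ ≤ δ₂ < 1), and let ψ : (0,∞) → (0,∞) be nondecreasing and satisfy the global weak scaling condition with exponents γ₁, γ₂ (0 < γ₁ ≤ γ₂ < 1). Assume in addition there is C₀ ≥ 1 such that s^{1/2}·ψ(1/s) ≥ C₀⁻¹·t^{1/2}·ψ(1/t) for all 0 < s ≤ t ≤ 2Φ(D*), and ∫_r^{2Φ(D*)} s^{−1/2}·ψ(1/s) ds ≤ C₀·r^{1/2}·ψ(1/r) for all 0 < r ≤ 2Φ(D*). Set θ(t) := Φ(t)·ψ(Φ(t)⁻¹). Then there exists C ≥ 1 such that for all a, b, r ∈ (0, D*], C⁻¹·min(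 θ(min(a,b)), θ(r) ) ≤ ∫₀^{Φ(r)} min(Φ(a)^{1/2}/t^{1/2}, 1) · min(Φ(b)^{1/2}/t^{1/2}, 1) · ψ(1/t) dt ≤ C·min( θ(min(a,b)), θ(r) ). -/
open MeasureTheory Set

/-!
Writing `m = min (Φ a) (Φ b)`, `M = Φ r` and `N = min m M`, the integral is comparable to
`N ψ(N⁻¹)`. On `(0, N]` both minima equal `1`, so the integrand is `ψ(t⁻¹) ≥ ψ(N⁻¹)`, which gives
the lower bound. For the upper bound, the upper scaling of `ψ` with exponent `γ₂ < 1` makes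
`ψ(t⁻¹) ≲ (N/t)^γ₂ ψ(N⁻¹)` integrable near `0` with `∫₀^N ψ(t⁻¹) dt ≲ N ψ(N⁻¹)`, while on `(N, M]`
the integrand is at most `√N ψ(t⁻¹)/√t`, whose integral is controlled by the integral hypothesis.
Finally the same scaling makes `x ↦ x ψ(x⁻¹)` almost increasing, so `N ψ(N⁻¹)` is comparable to
`min (m ψ(m⁻¹)) (M ψ(M⁻¹))`.
-/

noncomputable def kernelIntegrand (ψ : ℝ → ℝ) (A B t : ℝ) : ℝ :=
  min (√A / √t) 1 * min (√B / √t) 1 * ψ t⁻¹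

theorem min_le_apply_min {α β : Type*} [LinearOrder α] [LinearOrder β] (f : α → β) (x y : α) :
    min (f x) (f y) ≤ f (min x y) := by
  rcases min_choice x y with h | h <;> rw [h]
  exacts [min_le_left _ _, min_le_right _ _]

theorem apply_min_le_mul_min {f : ℝ → ℝ} {c : ℝ} (hc : 0 ≤ c)
    (hf : ∀ s t : ℝ, 0 < s → s ≤ t → f s ≤ c * f t) {x y : ℝ} (hx : 0 < x) (hy : 0 < y) :
    f (min x y) ≤ c * min (f x) (f y) := by
  rw [mul_min_of_nonneg _ _ hc]
  exact le_min (hf _ _ (lt_min hx hy) (min_le_left _ _)) (hf _ _ (lt_min hx hy) (min_le_right _ _))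

section

variable {ψ : ℝ → ℝ} {b₂ γ₂ : ℝ}

theorem one_le_of_scaling_le {r : ℝ} (hr : 0 < r) (hψr : ψ r ≠ 0)
    (hψ : ∀ r R : ℝ, 0 < r → r ≤ R → ψ R / ψ r ≤ b₂ * (R / r) ^ γ₂) : 1 ≤ b₂ := by
  simpa [div_self hψr, hr.ne'] using hψ r r hr le_rfl

theorem apply_inv_le_of_scaling_le (hψpos : ∀ x : ℝ, 0 < x → 0 < ψ x)
    (hψ : ∀ r R : ℝ, 0 < r → r ≤ R → ψ R / ψ r ≤ b₂ * (R / r) ^ γ₂)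
    {t X : ℝ} (ht : 0 < t) (htX : t ≤ X) :
    ψ t⁻¹ ≤ b₂ * X ^ γ₂ * ψ X⁻¹ * t ^ (-γ₂) := by
  have hX := ht.trans_le htX
  have h := hψ X⁻¹ t⁻¹ (inv_pos.2 hX) (inv_anti₀ ht htX)
  rw [div_le_iff₀ (hψpos _ (inv_pos.2 hX)), inv_div_inv, Real.div_rpow hX.le ht.le] at h
  calc ψ t⁻¹ ≤ b₂ * (X ^ γ₂ / t ^ γ₂) * ψ X⁻¹ := h
    _ = b₂ * X ^ γ₂ * ψ X⁻¹ * t ^ (-γ₂) := by rw [Real.rpow_neg ht.le]; ring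

theorem mul_apply_inv_le_of_scaling_le (hψpos : ∀ x : ℝ, 0 < x → 0 < ψ x)
    (hψ : ∀ r R : ℝ, 0 < r → r ≤ R → ψ R / ψ r ≤ b₂ * (R / r) ^ γ₂) (hγ₂ : γ₂ ≤ 1)
    {s t : ℝ} (hs : 0 < s) (hst : s ≤ t) :
    s * ψ s⁻¹ ≤ b₂ * (t * ψ t⁻¹) := by
  have ht := hs.trans_le hst
  have hb₂ : 0 ≤ b₂ := zero_le_one.trans (one_le_of_scaling_le one_pos (hψpos 1 one_pos).ne' hψ)
  have hψt := hψpos _ (inv_pos.2 ht)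
  have h := hψ t⁻¹ s⁻¹ (inv_pos.2 ht) (inv_anti₀ hs hst)
  rw [div_le_iff₀ hψt, inv_div_inv] at h
  have hpow : (t / s) ^ γ₂ ≤ t / s := by
    simpa using Real.rpow_le_rpow_of_exponent_le ((one_le_div hs).2 hst) hγ₂
  calc s * ψ s⁻¹ ≤ s * (b₂ * (t / s) * ψ t⁻¹) := by gcongr; exact h.trans (by gcongr)
    _ = b₂ * (t * ψ t⁻¹) := by field_simp

theorem antitoneOn_apply_inv (hψmono : MonotoneOn ψ (Ioi 0)) :
    AntitoneOn (fun t => ψ t⁻¹) (Ioi 0) := fun _ hs _ ht hst =>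
  hψmono (mem_Ioi.2 (inv_pos.2 ht)) (mem_Ioi.2 (inv_pos.2 hs)) (inv_anti₀ hs hst)

theorem integrableOn_rpow_Ioc {γ X : ℝ} (hγ : γ < 1) (hX : 0 ≤ X) :
    IntegrableOn (fun t : ℝ => t ^ (-γ)) (Ioc 0 X) :=
  (intervalIntegrable_iff_integrableOn_Ioc_of_le hX).1
    (intervalIntegral.intervalIntegrable_rpow' (by linarith))

theorem integrableOn_apply_inv_Ioc (hψpos : ∀ x : ℝ, 0 < x → 0 < ψ x)
    (hψmono : MonotoneOn ψ (Ioi 0))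
    (hψ : ∀ r R : ℝ, 0 < r → r ≤ R → ψ R / ψ r ≤ b₂ * (R / r) ^ γ₂) (hγ₂ : γ₂ < 1)
    {X : ℝ} (hX : 0 < X) :
    IntegrableOn (fun t => ψ t⁻¹) (Ioc 0 X) := by
  refine ((integrableOn_rpow_Ioc hγ₂ hX.le).const_mul (b₂ * X ^ γ₂ * ψ X⁻¹)).mono'
    (aemeasurable_restrict_of_antitoneOn measurableSet_Ioc
      ((antitoneOn_apply_inv hψmono).mono Ioc_subset_Ioi_self)).aestronglyMeasurable ?_
  filter_upwards [ae_restrict_mem measurableSet_Ioc] with t ht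
  rw [Real.norm_of_nonneg (hψpos _ (inv_pos.2 ht.1)).le]
  exact apply_inv_le_of_scaling_le hψpos hψ ht.1 ht.2

theorem setIntegral_apply_inv_Ioc_le (hψpos : ∀ x : ℝ, 0 < x → 0 < ψ x)
    (hψmono : MonotoneOn ψ (Ioi 0))
    (hψ : ∀ r R : ℝ, 0 < r → r ≤ R → ψ R / ψ r ≤ b₂ * (R / r) ^ γ₂) (hγ₂ : γ₂ < 1)
    {X : ℝ} (hX : 0 < X) :
    ∫ t in Ioc 0 X, ψ t⁻¹ ≤ b₂ / (1 - γ₂) * (X * ψ X⁻¹) := by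
  have hγ : -γ₂ + 1 = 1 - γ₂ := by ring
  calc ∫ t in Ioc 0 X, ψ t⁻¹ ≤ ∫ t in Ioc 0 X, b₂ * X ^ γ₂ * ψ X⁻¹ * t ^ (-γ₂) :=
        setIntegral_mono_on (integrableOn_apply_inv_Ioc hψpos hψmono hψ hγ₂ hX)
          ((integrableOn_rpow_Ioc hγ₂ hX.le).const_mul _) measurableSet_Ioc
          fun t ht => apply_inv_le_of_scaling_le hψpos hψ ht.1 ht.2
    _ = b₂ * X ^ γ₂ * ψ X⁻¹ * (X ^ (1 - γ₂) / (1 - γ₂)) := by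
        rw [integral_const_mul, ← intervalIntegral.integral_of_le hX.le,
          integral_rpow (Or.inl (by linarith)), hγ, Real.zero_rpow (by linarith), sub_zero]
    _ = b₂ / (1 - γ₂) * ((X ^ γ₂ * X ^ (1 - γ₂)) * ψ X⁻¹) := by ring
    _ = b₂ / (1 - γ₂) * (X * ψ X⁻¹) := by rw [← Real.rpow_add hX]; norm_num

theorem integrableOn_apply_inv_div_sqrt_Ioc (hψpos : ∀ x : ℝ, 0 < x → 0 < ψ x)
    (hψmono : MonotoneOn ψ (Ioi 0)) {N L : ℝ} (hN : 0 < N) :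
    IntegrableOn (fun t => ψ t⁻¹ / √t) (Ioc N L) := by
  have hanti : AntitoneOn (fun t => ψ t⁻¹ / √t) (Icc N L) := fun s hs t ht hst => by
    have hs0 := hN.trans_le hs.1
    exact div_le_div₀ (hψpos _ (inv_pos.2 hs0)).le
      (antitoneOn_apply_inv hψmono hs0 (hs0.trans_le hst) hst)
      (Real.sqrt_pos.2 hs0) (Real.sqrt_le_sqrt hst)
  exact (hanti.integrableOn_isCompact isCompact_Icc).mono_set Ioc_subset_Icc_self

theorem setIntegral_le_of_le_apply_inv {g : ℝ → ℝ} {N M L C₀ : ℝ}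
    (hψpos : ∀ x : ℝ, 0 < x → 0 < ψ x) (hψmono : MonotoneOn ψ (Ioi 0))
    (hψ : ∀ r R : ℝ, 0 < r → r ≤ R → ψ R / ψ r ≤ b₂ * (R / r) ^ γ₂) (hγ₂ : γ₂ < 1)
    (hN : 0 < N) (hNM : N ≤ M) (hML : M ≤ L) (hg : IntegrableOn g (Ioc 0 M))
    (hg_near : ∀ t ∈ Ioc 0 N, g t ≤ ψ t⁻¹) (hg_far : ∀ t ∈ Ioc N M, g t ≤ √N * (ψ t⁻¹ / √t))
    (hint : ∫ s in Ioc N L, ψ s⁻¹ / √s ≤ C₀ * (√N * ψ N⁻¹)) :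
    ∫ t in Ioc 0 M, g t ≤ (b₂ / (1 - γ₂) + C₀) * (N * ψ N⁻¹) := by
  have hfar_int := integrableOn_apply_inv_div_sqrt_Ioc (L := L) hψpos hψmono hN
  have hnear : ∫ t in Ioc 0 N, g t ≤ b₂ / (1 - γ₂) * (N * ψ N⁻¹) :=
    (setIntegral_mono_on (hg.mono_set (Ioc_subset_Ioc_right hNM))
      (integrableOn_apply_inv_Ioc hψpos hψmono hψ hγ₂ hN) measurableSet_Ioc hg_near).trans
      (setIntegral_apply_inv_Ioc_le hψpos hψmono hψ hγ₂ hN)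
  have hfar : ∫ t in Ioc N M, g t ≤ C₀ * (N * ψ N⁻¹) := calc
    ∫ t in Ioc N M, g t ≤ ∫ t in Ioc N M, √N * (ψ t⁻¹ / √t) :=
        setIntegral_mono_on (hg.mono_set (Ioc_subset_Ioc_left hN.le))
          ((hfar_int.mono_set (Ioc_subset_Ioc_right hML)).const_mul _) measurableSet_Ioc hg_far
    _ ≤ √N * ∫ t in Ioc N L, ψ t⁻¹ / √t := by
        rw [integral_const_mul]
        refine mul_le_mul_of_nonneg_left (setIntegral_mono_set hfar_int ?_
          (Ioc_subset_Ioc_right hML).eventuallyLE) (Real.sqrt_nonneg N)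
        filter_upwards [ae_restrict_mem measurableSet_Ioc] with t ht
        exact div_nonneg (hψpos _ (inv_pos.2 (hN.trans ht.1))).le (Real.sqrt_nonneg t)
    _ ≤ √N * (C₀ * (√N * ψ N⁻¹)) := by gcongr
    _ = C₀ * (N * ψ N⁻¹) := by linear_combination (C₀ * ψ N⁻¹) * Real.mul_self_sqrt hN.le
  rw [← Ioc_union_Ioc_eq_Ioc hN.le hNM, setIntegral_union (Ioc_disjoint_Ioc_of_le le_rfl)
    measurableSet_Ioc (hg.mono_set (Ioc_subset_Ioc_right hNM))
    (hg.mono_set (Ioc_subset_Ioc_left hN.le))]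
  linarith

variable {A B t : ℝ}

theorem kernelIntegrand_nonneg (hψt : 0 ≤ ψ t⁻¹) : 0 ≤ kernelIntegrand ψ A B t := by
  unfold kernelIntegrand
  positivity

theorem kernelIntegrand_le (hψt : 0 ≤ ψ t⁻¹) : kernelIntegrand ψ A B t ≤ ψ t⁻¹ :=
  mul_le_of_le_one_left hψt (mul_le_one₀ (min_le_right _ _) (by positivity) (min_le_right _ _))

theorem kernelIntegrand_eq (ht : 0 < t) (hA : t ≤ A) (hB : t ≤ B) :
    kernelIntegrand ψ A B t = ψ t⁻¹ := by
  have h : ∀ {C : ℝ}, t ≤ C → min (√C / √t) 1 = 1 := fun hC =>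
    min_eq_right ((one_le_div (Real.sqrt_pos.2 ht)).2 (Real.sqrt_le_sqrt hC))
  simp only [kernelIntegrand, h hA, h hB, one_mul]

theorem kernelIntegrand_le_sqrt_min_mul {M : ℝ} (ht : 0 < t) (htM : t ≤ M) (hψt : 0 ≤ ψ t⁻¹) :
    kernelIntegrand ψ A B t ≤ √(min (min A B) M) * (ψ t⁻¹ / √t) := by
  have hsqrt : √(min (min A B) M) / √t = min (min (√A / √t) (√B / √t)) (√M / √t) := by
    rw [Real.sqrt_monotone.map_min, Real.sqrt_monotone.map_min,
      ← min_div_div_right (Real.sqrt_nonneg t), ← min_div_div_right (Real.sqrt_nonneg t)]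
  have hM : 1 ≤ √M / √t := (one_le_div (Real.sqrt_pos.2 ht)).2 (Real.sqrt_le_sqrt htM)
  have hweight : min (√A / √t) 1 * min (√B / √t) 1 ≤ √(min (min A B) M) / √t := by
    rw [hsqrt]
    refine le_min (le_min ?_ ?_) ?_
    · exact (mul_le_of_le_one_right (by positivity) (min_le_right _ _)).trans (min_le_left _ _)
    · exact (mul_le_of_le_one_left (by positivity) (min_le_right _ _)).trans (min_le_left _ _)
    · exact (mul_le_one₀ (min_le_right _ _) (by positivity) (min_le_right _ _)).trans hM
  calc kernelIntegrand ψ A B t ≤ √(min (min A B) M) / √t * ψ t⁻¹ :=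
        mul_le_mul_of_nonneg_right hweight hψt
    _ = √(min (min A B) M) * (ψ t⁻¹ / √t) := by ring

theorem integrableOn_kernelIntegrand {M : ℝ} (hψpos : ∀ x : ℝ, 0 < x → 0 < ψ x)
    (hψmono : MonotoneOn ψ (Ioi 0))
    (hψ : ∀ r R : ℝ, 0 < r → r ≤ R → ψ R / ψ r ≤ b₂ * (R / r) ^ γ₂) (hγ₂ : γ₂ < 1)
    (hM : 0 < M) :
    IntegrableOn (kernelIntegrand ψ A B) (Ioc 0 M) := by
  refine (integrableOn_apply_inv_Ioc hψpos hψmono hψ hγ₂ hM).bdd_mul (c := 1)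
    (f := fun t => min (√A / √t) 1 * min (√B / √t) 1) (by fun_prop) ?_
  filter_upwards with t
  rw [Real.norm_of_nonneg (by positivity)]
  exact mul_le_one₀ (min_le_right _ _) (by positivity) (min_le_right _ _)

theorem mul_apply_inv_le_setIntegral_kernelIntegrand (hψpos : ∀ x : ℝ, 0 < x → 0 < ψ x)
    (hψmono : MonotoneOn ψ (Ioi 0)) {N M : ℝ} (hN : 0 < N) (hNA : N ≤ A) (hNB : N ≤ B)
    (hNM : N ≤ M) (hk : IntegrableOn (kernelIntegrand ψ A B) (Ioc 0 M)) :
    N * ψ N⁻¹ ≤ ∫ t in Ioc 0 M, kernelIntegrand ψ A B t := calc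
  N * ψ N⁻¹ = ∫ _ in Ioc 0 N, ψ N⁻¹ := by
      rw [setIntegral_const, measureReal_def, Real.volume_Ioc, sub_zero,
        ENNReal.toReal_ofReal hN.le, smul_eq_mul]
  _ ≤ ∫ t in Ioc 0 N, kernelIntegrand ψ A B t := by
      refine setIntegral_mono_on (integrableOn_const measure_Ioc_lt_top.ne)
        (hk.mono_set (Ioc_subset_Ioc_right hNM)) measurableSet_Ioc fun t ht => ?_
      rw [kernelIntegrand_eq ht.1 (ht.2.trans hNA) (ht.2.trans hNB)]
      exact antitoneOn_apply_inv hψmono ht.1 hN ht.2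
  _ ≤ ∫ t in Ioc 0 M, kernelIntegrand ψ A B t := by
      refine setIntegral_mono_set hk ?_ (Ioc_subset_Ioc_right hNM).eventuallyLE
      filter_upwards [ae_restrict_mem measurableSet_Ioc] with t ht
      exact kernelIntegrand_nonneg (hψpos _ (inv_pos.2 ht.1)).le

theorem min_mul_apply_inv_le_setIntegral_kernelIntegrand (hψpos : ∀ x : ℝ, 0 < x → 0 < ψ x)
    (hψmono : MonotoneOn ψ (Ioi 0))
    (hψ : ∀ r R : ℝ, 0 < r → r ≤ R → ψ R / ψ r ≤ b₂ * (R / r) ^ γ₂) (hγ₂ : γ₂ < 1)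
    {M : ℝ} (hA : 0 < A) (hB : 0 < B) (hM : 0 < M) :
    min (min A B * ψ (min A B)⁻¹) (M * ψ M⁻¹) ≤ ∫ t in Ioc 0 M, kernelIntegrand ψ A B t :=
  (min_le_apply_min (fun x => x * ψ x⁻¹) (min A B) M).trans <|
    mul_apply_inv_le_setIntegral_kernelIntegrand hψpos hψmono (lt_min (lt_min hA hB) hM)
      ((min_le_left _ _).trans (min_le_left _ _)) ((min_le_left _ _).trans (min_le_right _ _))
      (min_le_right _ _) (integrableOn_kernelIntegrand hψpos hψmono hψ hγ₂ hM)

theorem setIntegral_kernelIntegrand_le_mul_min (hψpos : ∀ x : ℝ, 0 < x → 0 < ψ x)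
    (hψmono : MonotoneOn ψ (Ioi 0))
    (hψ : ∀ r R : ℝ, 0 < r → r ≤ R → ψ R / ψ r ≤ b₂ * (R / r) ^ γ₂) (hγ₂ : γ₂ < 1)
    {M L C₀ : ℝ} (hC₀ : 0 ≤ C₀) (hA : 0 < A) (hB : 0 < B) (hM : 0 < M) (hML : M ≤ L)
    (hint : ∀ r : ℝ, 0 < r → r ≤ L → ∫ s in Ioc r L, ψ s⁻¹ / √s ≤ C₀ * (√r * ψ r⁻¹)) :
    ∫ t in Ioc 0 M, kernelIntegrand ψ A B t ≤
      b₂ * (b₂ / (1 - γ₂) + C₀) * min (min A B * ψ (min A B)⁻¹) (M * ψ M⁻¹) := by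
  have hm : 0 < min A B := lt_min hA hB
  have hN : 0 < min (min A B) M := lt_min hm hM
  have hψt : ∀ {t}, 0 < t → 0 ≤ ψ t⁻¹ := fun ht => (hψpos _ (inv_pos.2 ht)).le
  have hb₂ := one_le_of_scaling_le one_pos (hψpos 1 one_pos).ne' hψ
  calc ∫ t in Ioc 0 M, kernelIntegrand ψ A B t
      ≤ (b₂ / (1 - γ₂) + C₀) * (min (min A B) M * ψ (min (min A B) M)⁻¹) :=
        setIntegral_le_of_le_apply_inv hψpos hψmono hψ hγ₂ hN (min_le_right _ _) hML
          (integrableOn_kernelIntegrand hψpos hψmono hψ hγ₂ hM)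
          (fun t ht => kernelIntegrand_le (hψt ht.1))
          (fun t ht => kernelIntegrand_le_sqrt_min_mul (hN.trans ht.1) ht.2 (hψt (hN.trans ht.1)))
          (hint _ hN ((min_le_right _ _).trans hML))
    _ ≤ (b₂ / (1 - γ₂) + C₀) * (b₂ * min (min A B * ψ (min A B)⁻¹) (M * ψ M⁻¹)) := by
        have : 0 ≤ b₂ / (1 - γ₂) := div_nonneg (by linarith) (by linarith)
        exact mul_le_mul_of_nonneg_left (apply_min_le_mul_min (f := fun x => x * ψ x⁻¹)
          (by linarith) (fun _ _ hs hst => mul_apply_inv_le_of_scaling_le hψpos hψ hγ₂.le hs hst)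
          hm hM) (by linarith)
    _ = _ := by ring

end

theorem stmt_16_general (Dstar : ℝ)
    (Φ : ℝ → ℝ)
    (hΦpos : ∀ x : ℝ, 0 < x → 0 < Φ x)
    (hΦmono : MonotoneOn Φ (Set.Ioi 0))
    (ψ : ℝ → ℝ) (hψpos : ∀ x : ℝ, 0 < x → 0 < ψ x)
    (hψmono : MonotoneOn ψ (Set.Ioi 0))
    (b₁ b₂ γ₁ γ₂ : ℝ)
    (hγ₂ : γ₂ < 1)
    (hψscale : ∀ r R : ℝ, 0 < r → r ≤ R →
      b₁ * (R / r) ^ γ₁ ≤ ψ R / ψ r ∧ ψ R / ψ r ≤ b₂ * (R / r) ^ γ₂)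
    (C₀ : ℝ) (hC₀ : 1 ≤ C₀)
    (hint : ∀ r : ℝ, 0 < r → r ≤ 2 * Φ Dstar →
      ∫ s in Set.Ioc r (2 * Φ Dstar), ψ (1 / s) / Real.sqrt s ≤
        C₀ * (Real.sqrt r * ψ (1 / r))) :
    ∃ C : ℝ, 1 ≤ C ∧ ∀ a b r : ℝ,
      0 < a → a ≤ Dstar → 0 < b → b ≤ Dstar → 0 < r → r ≤ Dstar →
      C⁻¹ * min (Φ (min a b) * ψ ((Φ (min a b))⁻¹)) (Φ r * ψ ((Φ r)⁻¹)) ≤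
        (∫ t in Set.Ioc (0 : ℝ) (Φ r),
          min (Real.sqrt (Φ a) / Real.sqrt t) 1 *
            min (Real.sqrt (Φ b) / Real.sqrt t) 1 * ψ (1 / t)) ∧
      (∫ t in Set.Ioc (0 : ℝ) (Φ r),
          min (Real.sqrt (Φ a) / Real.sqrt t) 1 *
            min (Real.sqrt (Φ b) / Real.sqrt t) 1 * ψ (1 / t)) ≤
        C * min (Φ (min a b) * ψ ((Φ (min a b))⁻¹)) (Φ r * ψ ((Φ r)⁻¹)) := by
  have hψ : ∀ r R : ℝ, 0 < r → r ≤ R → ψ R / ψ r ≤ b₂ * (R / r) ^ γ₂ :=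
    fun r R hr hrR => (hψscale r R hr hrR).2
  have hb₂ : 1 ≤ b₂ := one_le_of_scaling_le one_pos (hψpos 1 one_pos).ne' hψ
  have hC : 1 ≤ b₂ * (b₂ / (1 - γ₂) + C₀) := by
    have : 0 ≤ b₂ / (1 - γ₂) := div_nonneg (by linarith) (by linarith)
    nlinarith
  refine ⟨_, hC, fun a b r ha haD hb hbD hr hrD => ?_⟩
  simp only [one_div] at hint ⊢
  have hΦmin : Φ (min a b) = min (Φ a) (Φ b) := by
    rcases le_total a b with h | h
    · rw [min_eq_left h, min_eq_left (hΦmono ha hb h)]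
    · rw [min_eq_right h, min_eq_right (hΦmono hb ha h)]
  have hML : Φ r ≤ 2 * Φ Dstar := by
    linarith [hΦpos Dstar (hr.trans_le hrD), hΦmono hr (hr.trans_le hrD) hrD]
  have hA := hΦpos a ha
  have hB := hΦpos b hb
  have hM := hΦpos r hr
  have hθ : 0 ≤ min (min (Φ a) (Φ b) * ψ (min (Φ a) (Φ b))⁻¹) (Φ r * ψ (Φ r)⁻¹) :=
    le_min (mul_pos (lt_min hA hB) (hψpos _ (inv_pos.2 (lt_min hA hB)))).le
      (mul_pos hM (hψpos _ (inv_pos.2 hM))).le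
  rw [hΦmin]
  exact ⟨(mul_le_of_le_one_left hθ (inv_le_one_of_one_le₀ hC)).trans
      (min_mul_apply_inv_le_setIntegral_kernelIntegrand hψpos hψmono hψ hγ₂ hA hB hM),
    setIntegral_kernelIntegrand_le_mul_min hψpos hψmono hψ hγ₂ (by linarith) hA hB hM hML hint⟩

/-- Lemma 7.1(i) of the paper: two-sided estimate of the small-time jumping
kernel integral in terms of `θ(t) = Φ(t)·ψ(Φ(t)⁻¹)`, under the almost-decreasing assumption
on `s ↦ s^{1/2}ψ(1/s)`. -/
theorem stmt_16 (Dstar : ℝ) (hDstar : 0 < Dstar)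
    (Φ : ℝ → ℝ)
    (hΦpos : ∀ x : ℝ, 0 < x → 0 < Φ x)
    (hΦmono : MonotoneOn Φ (Set.Ioi 0))
    (c₁ c₂ δ₁ δ₂ : ℝ) (hc₁ : 0 < c₁) (hc₂ : 0 < c₂)
    (hδ₁ : 0 < δ₁) (hδ : δ₁ ≤ δ₂) (hδ₂ : δ₂ < 1)
    (hΦscale : ∀ r R : ℝ, 0 < r → r ≤ R →
      c₁ * (R / r) ^ (2 * δ₁) ≤ Φ R / Φ r ∧ Φ R / Φ r ≤ c₂ * (R / r) ^ (2 * δ₂))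
    (ψ : ℝ → ℝ) (hψpos : ∀ x : ℝ, 0 < x → 0 < ψ x)
    (hψmono : MonotoneOn ψ (Set.Ioi 0))
    (b₁ b₂ γ₁ γ₂ : ℝ) (hb₁ : 0 < b₁) (hb₂ : 0 < b₂)
    (hγ₁ : 0 < γ₁) (hγ : γ₁ ≤ γ₂) (hγ₂ : γ₂ < 1)
    (hψscale : ∀ r R : ℝ, 0 < r → r ≤ R →
      b₁ * (R / r) ^ γ₁ ≤ ψ R / ψ r ∧ ψ R / ψ r ≤ b₂ * (R / r) ^ γ₂)
    (C₀ : ℝ) (hC₀ : 1 ≤ C₀)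
    (halmost : ∀ s t : ℝ, 0 < s → s ≤ t → t ≤ 2 * Φ Dstar →
      C₀⁻¹ * (Real.sqrt t * ψ (1 / t)) ≤ Real.sqrt s * ψ (1 / s))
    (hint : ∀ r : ℝ, 0 < r → r ≤ 2 * Φ Dstar →
      ∫ s in Set.Ioc r (2 * Φ Dstar), ψ (1 / s) / Real.sqrt s ≤
        C₀ * (Real.sqrt r * ψ (1 / r))) :
    ∃ C : ℝ, 1 ≤ C ∧ ∀ a b r : ℝ,
      0 < a → a ≤ Dstar → 0 < b → b ≤ Dstar → 0 < r → r ≤ Dstar →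
      C⁻¹ * min (Φ (min a b) * ψ ((Φ (min a b))⁻¹)) (Φ r * ψ ((Φ r)⁻¹)) ≤
        (∫ t in Set.Ioc (0 : ℝ) (Φ r),
          min (Real.sqrt (Φ a) / Real.sqrt t) 1 *
            min (Real.sqrt (Φ b) / Real.sqrt t) 1 * ψ (1 / t)) ∧
      (∫ t in Set.Ioc (0 : ℝ) (Φ r),
          min (Real.sqrt (Φ a) / Real.sqrt t) 1 *
            min (Real.sqrt (Φ b) / Real.sqrt t) 1 * ψ (1 / t)) ≤
        C * min (Φ (min a b) * ψ ((Φ (min a b))⁻¹)) (Φ r * ψ ((Φ r)⁻¹)) :=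
  stmt_16_general Dstar Φ hΦpos hΦmono ψ hψpos hψmono b₁ b₂ γ₁ γ₂ hγ₂ hψscale C₀ hC₀ hint
end

section
/- Let T* > 0, let Φ : (0,∞) → (0,∞) be nondecreasing, and let ψ : (0,∞) → (0,∞) be nondecreasing such that u ↦ u·ψ(1/u) is nondecreasing on (0,∞) and there is C₀ ≥ 1 with s^{1/2}·ψ(1/s) ≥ C₀⁻¹·t^{1/2}·ψ(1/t) for all 0 < s ≤ t ≤ Φ(T*). Set θ(t) := Φ(t)·ψ(Φ(t)⁻¹). Then there exists C > 0 such that for all a, b, r ∈ (0, T*], min(Φ(a)^{1/2}/Φ(r)^{1/2}, 1) · min(Φ(b)^{1/2}/Φ(r)^{1/2}, 1) ≤ C·min( θ(min(a,b))/θ(r), 1 ). -/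
/-! Write `g u = √u · ψ(1/u)`, so that `u ψ(1/u) = √u · g u`. If `Φ m ≥ Φ r`, the monotonicity of
`u ↦ u ψ(1/u)` makes the `θ`-ratio at least `1`. If `Φ m ≤ Φ r`, the almost-decreasing property
gives `g (Φ r) ≤ C₀ g (Φ m)`, hence `√(Φ m / Φ r) ≤ C₀ θ(m) / θ(r)`. Since both boundary factors are
at most `1`, their product is bounded by the factor of `min a b`. -/

open Real

theorem sqrt_div_le_mul_div_of_inv_mul_le {ψ : ℝ → ℝ} {C₀ x y : ℝ} (hC₀ : 0 < C₀)
    (hx : 0 ≤ x) (hy : 0 < y) (hψy : 0 < ψ y⁻¹)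
    (h : C₀⁻¹ * (√y * ψ (1 / y)) ≤ √x * ψ (1 / x)) :
    √x / √y ≤ C₀ * (x * ψ x⁻¹ / (y * ψ y⁻¹)) := by
  have hg : √y * ψ y⁻¹ ≤ C₀ * (√x * ψ x⁻¹) := by
    simp only [one_div] at h
    rwa [inv_mul_le_iff₀ hC₀] at h
  have hg' : 1 ≤ C₀ * (√x * ψ x⁻¹) / (√y * ψ y⁻¹) := (one_le_div (by positivity)).2 hg
  calc √x / √y = √x / √y * 1 := (mul_one _).symm
    _ ≤ √x / √y * (C₀ * (√x * ψ x⁻¹) / (√y * ψ y⁻¹)) := by gcongr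
    _ = C₀ * (x * ψ x⁻¹ / (y * ψ y⁻¹)) := by
      field_simp
      rw [sq_sqrt hx, sq_sqrt hy.le]
      ring

theorem min_sqrt_div_le_mul_min_div {ψ : ℝ → ℝ} {C₀ L x y : ℝ}
    (hψpos : ∀ u : ℝ, 0 < u → 0 < ψ u)
    (hu : MonotoneOn (fun u : ℝ => u * ψ (1 / u)) (Set.Ioi 0)) (hC₀ : 1 ≤ C₀)
    (halmost : ∀ s t : ℝ, 0 < s → s ≤ t → t ≤ L →
      C₀⁻¹ * (√t * ψ (1 / t)) ≤ √s * ψ (1 / s))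
    (hx : 0 < x) (hy : 0 < y) (hyL : y ≤ L) :
    min (√x / √y) 1 ≤ C₀ * min (x * ψ x⁻¹ / (y * ψ y⁻¹)) 1 := by
  have hψy := hψpos _ (inv_pos.2 hy)
  rcases le_total y x with hyx | hxy
  · have hθ : y * ψ y⁻¹ ≤ x * ψ x⁻¹ := by
      simpa only [one_div] using hu (Set.mem_Ioi.2 hy) (Set.mem_Ioi.2 hx) hyx
    rw [min_eq_right ((one_le_div (by positivity)).2 hθ), mul_one]
    exact (min_le_right _ _).trans hC₀
  · have hsqrt : √x / √y ≤ 1 := div_le_one_of_le₀ (sqrt_le_sqrt hxy) (sqrt_nonneg _)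
    rw [mul_min_of_nonneg _ _ (by linarith), mul_one]
    exact (min_le_left _ _).trans
      (le_min (sqrt_div_le_mul_div_of_inv_mul_le (by linarith) hx.le hy hψy
        (halmost x y hx hxy hyL)) (hsqrt.trans hC₀))

theorem stmt_18_general (Tstar : ℝ) (hTstar : 0 < Tstar)
    (Φ : ℝ → ℝ)
    (hΦpos : ∀ x : ℝ, 0 < x → 0 < Φ x)
    (hΦmono : MonotoneOn Φ (Set.Ioi 0))
    (ψ : ℝ → ℝ) (hψpos : ∀ x : ℝ, 0 < x → 0 < ψ x)
    (hu : MonotoneOn (fun u : ℝ => u * ψ (1 / u)) (Set.Ioi 0))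
    (C₀ : ℝ) (hC₀ : 1 ≤ C₀)
    (halmost : ∀ s t : ℝ, 0 < s → s ≤ t → t ≤ Φ Tstar →
      C₀⁻¹ * (Real.sqrt t * ψ (1 / t)) ≤ Real.sqrt s * ψ (1 / s)) :
    ∃ C : ℝ, 0 < C ∧ ∀ a b r : ℝ,
      0 < a → a ≤ Tstar → 0 < b → b ≤ Tstar → 0 < r → r ≤ Tstar →
      min (Real.sqrt (Φ a) / Real.sqrt (Φ r)) 1 *
          min (Real.sqrt (Φ b) / Real.sqrt (Φ r)) 1 ≤
        C * min ((Φ (min a b) * ψ ((Φ (min a b))⁻¹)) / (Φ r * ψ ((Φ r)⁻¹))) 1 := by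
  refine ⟨C₀, by linarith, fun a b r ha haT hb hbT hr hrT => ?_⟩
  have key : ∀ m : ℝ, 0 < m → m ≤ Tstar →
      min (√(Φ m) / √(Φ r)) 1 ≤ C₀ * min (Φ m * ψ (Φ m)⁻¹ / (Φ r * ψ (Φ r)⁻¹)) 1 :=
    fun m hm _ => min_sqrt_div_le_mul_min_div hψpos hu hC₀ halmost (hΦpos m hm) (hΦpos r hr)
      (hΦmono hr hTstar hrT)
  have hfac : ∀ m : ℝ, 0 ≤ min (√(Φ m) / √(Φ r)) 1 := fun m => by positivity
  rcases le_total a b with hab | hab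
  · rw [min_eq_left hab]
    exact (mul_le_of_le_one_right (hfac a) (min_le_right _ _)).trans (key a ha haT)
  · rw [min_eq_right hab]
    exact (mul_le_of_le_one_left (hfac b) (min_le_right _ _)).trans (key b hb hbT)

/-- Lemma 7.2(i) of the paper: comparison of the boundary factors with the
`θ`-ratio, where `θ(t) = Φ(t)·ψ(Φ(t)⁻¹)`, under the almost-decreasing assumption on
`s ↦ s^{1/2}ψ(1/s)`. -/
theorem stmt_18 (Tstar : ℝ) (hTstar : 0 < Tstar)
    (Φ : ℝ → ℝ)
    (hΦpos : ∀ x : ℝ, 0 < x → 0 < Φ x)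
    (hΦmono : MonotoneOn Φ (Set.Ioi 0))
    (ψ : ℝ → ℝ) (hψpos : ∀ x : ℝ, 0 < x → 0 < ψ x)
    (hψmono : MonotoneOn ψ (Set.Ioi 0))
    (hu : MonotoneOn (fun u : ℝ => u * ψ (1 / u)) (Set.Ioi 0))
    (C₀ : ℝ) (hC₀ : 1 ≤ C₀)
    (halmost : ∀ s t : ℝ, 0 < s → s ≤ t → t ≤ Φ Tstar →
      C₀⁻¹ * (Real.sqrt t * ψ (1 / t)) ≤ Real.sqrt s * ψ (1 / s)) :
    ∃ C : ℝ, 0 < C ∧ ∀ a b r : ℝ,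
      0 < a → a ≤ Tstar → 0 < b → b ≤ Tstar → 0 < r → r ≤ Tstar →
      min (Real.sqrt (Φ a) / Real.sqrt (Φ r)) 1 *
          min (Real.sqrt (Φ b) / Real.sqrt (Φ r)) 1 ≤
        C * min ((Φ (min a b) * ψ ((Φ (min a b))⁻¹)) / (Φ r * ψ ((Φ r)⁻¹))) 1 :=
  stmt_18_general Tstar hTstar Φ hΦpos hΦmono ψ hψpos hu C₀ hC₀ halmost
end

section
/- Let T* > 0, let Φ : (0,∞) → (0,∞) be nondecreasing, and let ψ : (0,∞) → (0,∞) be nondecreasing such that there is C₀ ≥ 1 with s^{1/2}·ψ(1/s) ≤ C₀·t^{1/2}·ψ(1/t) for all 0 < s ≤ t ≤ Φ(T*). Set η(t) := Φ(t)^{1/2}·ψ(Φ(t)⁻¹). Then there exists C > 0 such that for all a, b, r ∈ (0, T*], min(Φ(a)^{1/2}/Φ(r)^{1/2}, 1) · min(Φ(b)^{1/2}/Φ(r)^{1/2}, 1) ≤ C·min( Φ(min(a,b))^{1/2}/Φ(r)^{1/2}, 1 )·min( η(max(a,b))/η(r), 1 ). -/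
/-!
Write `g s = √s · ψ(1/s)`, so that `η = g ∘ Φ`. It suffices to bound the factor belonging to
`d = max a b` by `C₀ · min (η d / η r) 1`. If `Φ r ≤ Φ d`, the left side is at most `1` and the
almost-monotonicity of `g` gives `η d / η r ≥ 1 / C₀`. If `Φ d < Φ r`, monotonicity of `ψ`
gives `ψ(Φ r⁻¹) ≤ ψ(Φ d⁻¹)`, so `η d / η r ≥ √(Φ d) / √(Φ r)`.
-/

open Set

lemma one_le_mul_min_div_one {C x y : ℝ} (hC : 1 ≤ C) (hy : 0 < y) (hyx : y ≤ C * x) :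
    1 ≤ C * min (x / y) 1 := by
  rw [mul_min_of_nonneg _ _ (by linarith), mul_one, ← mul_div_assoc]
  exact le_min ((one_le_div₀ hy).mpr hyx) hC

lemma min_sqrt_div_le_mul_min_sqrt_mul_div {ψ : ℝ → ℝ} (hψpos : ∀ x : ℝ, 0 < x → 0 < ψ x)
    (hψmono : MonotoneOn ψ (Ioi 0)) {C₀ u v : ℝ} (hC₀ : 1 ≤ C₀) (hu : 0 < u) (hv : 0 < v)
    (halmost : v ≤ u → √v * ψ (1 / v) ≤ C₀ * (√u * ψ (1 / u))) :
    min (√u / √v) 1 ≤ C₀ * min (√u * ψ u⁻¹ / (√v * ψ v⁻¹)) 1 := by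
  have hψu := hψpos _ (inv_pos.mpr hu)
  have hψv := hψpos _ (inv_pos.mpr hv)
  rcases le_or_gt v u with hvu | huv
  · refine (min_le_right _ _).trans (one_le_mul_min_div_one hC₀ (by positivity) ?_)
    simpa only [one_div] using halmost hvu
  · have hψ : ψ v⁻¹ ≤ ψ u⁻¹ :=
      hψmono (inv_pos.mpr hv) (inv_pos.mpr hu) (inv_anti₀ hu huv.le)
    have hratio : √u / √v ≤ √u * ψ u⁻¹ / (√v * ψ v⁻¹) := by
      rw [mul_div_mul_comm]
      exact le_mul_of_one_le_right (by positivity) ((one_le_div₀ hψv).mpr hψ)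
    have hsqrt : √u / √v ≤ 1 :=
      div_le_one_of_le₀ (Real.sqrt_le_sqrt huv.le) (Real.sqrt_nonneg _)
    calc min (√u / √v) 1 ≤ √u / √v := min_le_left _ _
      _ ≤ min (√u * ψ u⁻¹ / (√v * ψ v⁻¹)) 1 := le_min hratio hsqrt
      _ ≤ C₀ * min (√u * ψ u⁻¹ / (√v * ψ v⁻¹)) 1 :=
        le_mul_of_one_le_left (le_min (by positivity) zero_le_one) hC₀

lemma mul_le_mul_min_mul_max {α : Type*} [LinearOrder α] {f g : α → ℝ} {C : ℝ} (a b : α)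
    (hf : 0 ≤ f (min a b)) (hfg : f (max a b) ≤ C * g (max a b)) :
    f a * f b ≤ C * (f (min a b) * g (max a b)) := by
  have hsplit : f a * f b = f (min a b) * f (max a b) := by
    rcases le_total a b with h | h <;> simp [h, mul_comm]
  calc f a * f b = f (min a b) * f (max a b) := hsplit
    _ ≤ f (min a b) * (C * g (max a b)) := mul_le_mul_of_nonneg_left hfg hf
    _ = C * (f (min a b) * g (max a b)) := mul_left_comm _ _ _

/-- Lemma 7.2(ii) of the paper: comparison of the boundary factors with the
`Φ^{1/2}`- and `η`-ratios, where `η(t) = Φ(t)^{1/2}·ψ(Φ(t)⁻¹)`, under the almost-increasing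
assumption on `s ↦ s^{1/2}ψ(1/s)`. -/
theorem stmt_19 (Tstar : ℝ) (hTstar : 0 < Tstar)
    (Φ : ℝ → ℝ)
    (hΦpos : ∀ x : ℝ, 0 < x → 0 < Φ x)
    (hΦmono : MonotoneOn Φ (Set.Ioi 0))
    (ψ : ℝ → ℝ) (hψpos : ∀ x : ℝ, 0 < x → 0 < ψ x)
    (hψmono : MonotoneOn ψ (Set.Ioi 0))
    (C₀ : ℝ) (hC₀ : 1 ≤ C₀)
    (halmost : ∀ s t : ℝ, 0 < s → s ≤ t → t ≤ Φ Tstar →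
      Real.sqrt s * ψ (1 / s) ≤ C₀ * (Real.sqrt t * ψ (1 / t))) :
    ∃ C : ℝ, 0 < C ∧ ∀ a b r : ℝ,
      0 < a → a ≤ Tstar → 0 < b → b ≤ Tstar → 0 < r → r ≤ Tstar →
      min (Real.sqrt (Φ a) / Real.sqrt (Φ r)) 1 *
          min (Real.sqrt (Φ b) / Real.sqrt (Φ r)) 1 ≤
        C * (min (Real.sqrt (Φ (min a b)) / Real.sqrt (Φ r)) 1 *
          min ((Real.sqrt (Φ (max a b)) * ψ ((Φ (max a b))⁻¹)) /
            (Real.sqrt (Φ r) * ψ ((Φ r)⁻¹))) 1) := by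
  refine ⟨C₀, by linarith, fun a b r ha haT hb hbT hr _ => ?_⟩
  have hd : 0 < max a b := lt_max_of_lt_left ha
  have hΦd : Φ (max a b) ≤ Φ Tstar := hΦmono hd hTstar (max_le haT hbT)
  exact mul_le_mul_min_mul_max (f := fun x => min (√(Φ x) / √(Φ r)) 1)
    (g := fun x => min (√(Φ x) * ψ (Φ x)⁻¹ / (√(Φ r) * ψ (Φ r)⁻¹)) 1) a b (by positivity)
    (min_sqrt_div_le_mul_min_sqrt_mul_div hψpos hψmono hC₀ (hΦpos _ hd) (hΦpos r hr)
      fun hrd => halmost _ _ (hΦpos r hr) hrd hΦd)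
end
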